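/- arXiv:1503.04460 — 4 statements merged into one kernel-verified Lean document; each statement's English description precedes it below -/
import Mathlib

section
/- (Infimal characterization of distortion risks.) Let Φ be a distortion kernel and suppose the distortion risk measure ρ_Φ is finite and norm-continuous on Lᵖ (p ∈ [1, ∞)). Then for every X ∈ Lᵖ that is bounded below, there exists a lower semicontinuous coherent risk measure ρ on Lᵖ with ρ(Z) ≥ ρ_Φ(Z) for all Z ∈ Lᵖ and ρ(X) = ρ_Φ(X); consequently ρ_Φ(X) = min{ρ(X) : ρ a lower semicontinuous coherent risk measure on Lᵖ with ρ ≥ ρ_Φ}. -/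
open MeasureTheory Filter
open scoped ENNReal Pointwise Classical

noncomputable section

variable {Ω : Type*} [MeasurableSpace Ω]

/-- The dual set `Δ_φ = {Y ∈ L^q | E(XY) ≤ φ(X) for all X ∈ L^p}`. -/
def dualSet (P : Measure Ω) (p q : ℝ≥0∞) (φ : Lp ℝ p P → EReal) : Set (Lp ℝ q P) :=
  {Y | ∀ X : Lp ℝ p P, ((∫ ω, X ω * Y ω ∂P : ℝ) : EReal) ≤ φ X}

/-- The infimal convolution `φ₁ □ ⋯ □ φₙ`. -/
def infConv (P : Measure Ω) (p : ℝ≥0∞) {n : ℕ} (φ : Fin n → (Lp ℝ p P → EReal))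
    (X : Lp ℝ p P) : EReal :=
  ⨅ (Xs : Fin n → Lp ℝ p P) (_ : ∑ i, Xs i = X), ∑ i, φ i (Xs i)

/-- The convex conjugate `φ*(Y) = sup_X E(XY) − φ(X)`. -/
def conjugate (P : Measure Ω) (p q : ℝ≥0∞) (φ : Lp ℝ p P → EReal) (Y : Lp ℝ q P) : EReal :=
  ⨆ X : Lp ℝ p P, ((∫ ω, X ω * Y ω ∂P : ℝ) : EReal) - φ X

/-- A (lower semicontinuous) coherent risk measure on `L^p`, with values in `ℝ ∪ {+∞}`:
positively homogeneous, cash-invariant, monotone and subadditive. -/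
structure IsCoherentRiskMeasure (P : Measure Ω) [IsFiniteMeasure P] (p : ℝ≥0∞) [Fact (1 ≤ p)]
    (ρ : Lp ℝ p P → EReal) : Prop where
  ne_bot : ∀ X, ρ X ≠ ⊥
  lsc : LowerSemicontinuous ρ
  posHom : ∀ (c : ℝ), 0 < c → ∀ X, ρ (c • X) = (c : EReal) * ρ X
  cash : ∀ (c : ℝ) (X : Lp ℝ p P), ρ (X + (memLp_const c).toLp (fun _ => c)) = ρ X + (c : EReal)
  mono : ∀ X Y : Lp ℝ p P, (X : Ω → ℝ) ≤ᵐ[P] (Y : Ω → ℝ) → ρ X ≤ ρ Y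
  subadd : ∀ X Y : Lp ℝ p P, ρ (X + Y) ≤ ρ X + ρ Y


/-- `VaR_t(X) = inf {x ∈ ℝ | P(X > x) ≤ 1 − t}`. -/
def VaR (P : Measure Ω) (X : Ω → ℝ) (t : ℝ) : ℝ :=
  sInf {x : ℝ | P {ω | x < X ω} ≤ ENNReal.ofReal (1 - t)}

/-- A distortion kernel: a nondecreasing right-continuous `Φ : [0,1] → [0,1]` with
`Φ(0) = 0` and `Φ(1) = 1`, modelled as a Stieltjes function on `ℝ` extended by `0`
to the left of `0` and by `1` to the right of `1`. -/
structure DistortionKernel where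
  toStieltjes : StieltjesFunction ℝ
  zero_of_nonpos : ∀ x : ℝ, x ≤ 0 → toStieltjes x = 0
  one_of_one_le : ∀ x : ℝ, 1 ≤ x → toStieltjes x = 1

/-- The distortion risk measure `ρ_Φ(X) = ∫₀¹ VaR_t(X) dΦ(t)` (integral against the
Lebesgue–Stieltjes measure of `Φ`). -/
def distortionRisk (P : Measure Ω) (K : DistortionKernel) (X : Ω → ℝ) : ℝ :=
  ∫ t in Set.Ioc (0 : ℝ) 1, VaR P X t ∂K.toStieltjes.measure

/-- The cumulative distribution function `F_X(x) = P(X ≤ x)`. -/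
def cdf (P : Measure Ω) (X : Ω → ℝ) (x : ℝ) : ℝ :=
  (P {ω | X ω ≤ x}).toReal


/-!
Let `a = ρ_Φ(X)`. The functional `ρ₀(Z) = inf {c a + b : c ≥ 0, Z ≤ c X + b}` is monotone,
positively homogeneous, cash-invariant and subadditive, and `ρ₀(X) ≤ a`. It dominates `ρ_Φ`
because `ρ_Φ` is affinely monotone: `Z ≤ c W + b` implies `ρ_Φ(Z) ≤ c ρ_Φ(W) + b`, obtained by
integrating the same inequality for `VaR_t`. That inequality can only fail at `t = 1`, where
`VaR_1` is an essential supremum; continuity of `ρ_Φ` forces `dΦ({1}) = 0` as soon as some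
element of `Lᵖ` is not essentially bounded above. Finally, the lower semicontinuous envelope of
`ρ₀` keeps all the algebraic properties and, `ρ_Φ` being continuous, still dominates `ρ_Φ`.
-/

open Set Topology

lemma EReal.continuous_coe_mul {c : ℝ} (hc : c ≠ 0) :
    Continuous fun r : EReal => (c : EReal) * r :=
  continuous_iff_continuousAt.2 fun r =>
    (EReal.continuousAt_mul (p := ((c : EReal), r)) (Or.inl (by simpa using hc))
      (Or.inl (by simpa using hc)) (Or.inl (EReal.coe_ne_bot c))
      (Or.inl (EReal.coe_ne_top c))).comp (f := fun r : EReal => ((c : EReal), r)) (by fun_prop)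

lemma EReal.continuous_add_coe (d : ℝ) : Continuous fun r : EReal => r + d :=
  continuous_iff_continuousAt.2 fun r =>
    (EReal.continuousAt_add (p := (r, (d : EReal))) (Or.inr (EReal.coe_ne_bot d))
      (Or.inr (EReal.coe_ne_top d))).comp (f := fun r : EReal => (r, (d : EReal))) (by fun_prop)

section LscEnvelope

variable {α : Type*} [TopologicalSpace α]

def lscEnvelope (f : α → EReal) (x : α) : EReal :=
  liminf f (𝓝 x)

lemma lscEnvelope_le (f : α → EReal) (x : α) : lscEnvelope f x ≤ f x :=
  liminf_le_of_frequently_le' <| frequently_iff.2 fun hU => ⟨x, mem_of_mem_nhds hU, le_rfl⟩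

lemma lscEnvelope_mono {f g : α → EReal} (h : f ≤ g) : lscEnvelope f ≤ lscEnvelope g :=
  fun _ => liminf_le_liminf (Eventually.of_forall h)

lemma LowerSemicontinuous.le_lscEnvelope {f g : α → EReal} (hg : LowerSemicontinuous g)
    (h : g ≤ f) : g ≤ lscEnvelope f :=
  fun x => (hg.le_liminf x).trans (lscEnvelope_mono h x)

lemma lowerSemicontinuous_lscEnvelope (f : α → EReal) : LowerSemicontinuous (lscEnvelope f) := by
  intro x y hy
  obtain ⟨y', hyy', hy'⟩ := exists_between hy
  obtain ⟨U, hU, hUo, hxU⟩ := eventually_nhds_iff.1 (eventually_lt_of_lt_liminf hy')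
  filter_upwards [hUo.mem_nhds hxU] with z hz
  exact hyy'.trans_le <| le_liminf_of_le (by isBoundedDefault) <|
    eventually_of_mem (hUo.mem_nhds hz) fun w hw => (hU w hw).le

lemma lscEnvelope_homeomorph_apply (T : α ≃ₜ α) (f : α → EReal) (x : α) :
    lscEnvelope f (T x) = lscEnvelope (f ∘ T) x := by
  rw [lscEnvelope, ← T.map_nhds_eq]
  rfl

lemma lscEnvelope_comp_left {g : EReal → EReal} (hg : Monotone g) (hgc : Continuous g)
    (f : α → EReal) : lscEnvelope (g ∘ f) = g ∘ lscEnvelope f :=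
  funext fun _ => (hg.map_liminf_of_continuousAt f hgc.continuousAt).symm

lemma lscEnvelope_add_le [Add α] [ContinuousAdd α] {f : α → EReal}
    (hf : ∀ x y, f (x + y) ≤ f x + f y) {x y : α} (hx : lscEnvelope f x ≠ ⊥)
    (hy : lscEnvelope f y ≠ ⊥) : lscEnvelope f (x + y) ≤ lscEnvelope f x + lscEnvelope f y := by
  refine EReal.le_add_of_forall_gt (Or.inl hx) (Or.inr hy) fun a ha b hb => ?_
  have hfreq : ∃ᶠ q in 𝓝 x ×ˢ 𝓝 y, f q.1 < a ∧ f q.2 < b :=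
    frequently_prod_and.2 ⟨frequently_lt_of_liminf_lt (by isBoundedDefault) ha,
      frequently_lt_of_liminf_lt (by isBoundedDefault) hb⟩
  have hadd : Tendsto (fun q : α × α => q.1 + q.2) (𝓝 x ×ˢ 𝓝 y) (𝓝 (x + y)) :=
    nhds_prod_eq (x := x) (y := y) ▸ continuous_add.tendsto (x, y)
  calc lscEnvelope f (x + y) ≤ liminf (fun q : α × α => f (q.1 + q.2)) (𝓝 x ×ˢ 𝓝 y) :=
        liminf_le_liminf_of_le hadd
    _ ≤ a + b := liminf_le_of_frequently_le' <|
        hfreq.mono fun q hq => (hf _ _).trans (add_le_add hq.1.le hq.2.le)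

end LscEnvelope

section DominatedRisk

variable {P : Measure Ω} {X Y Z : Ω → ℝ} {a : ℝ}

/-- The smallest monotone, positively homogeneous, cash-invariant functional with value at most
`a` at `X`. -/
def dominatedRisk (P : Measure Ω) (X : Ω → ℝ) (a : ℝ) (Z : Ω → ℝ) : EReal :=
  sInf {r : EReal | ∃ c b : ℝ, 0 ≤ c ∧ Z ≤ᵐ[P] (fun ω => c * X ω + b) ∧
    r = ((c * a + b : ℝ) : EReal)}

lemma dominatedRisk_le {c b : ℝ} (hc : 0 ≤ c) (h : Z ≤ᵐ[P] fun ω => c * X ω + b) :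
    dominatedRisk P X a Z ≤ ((c * a + b : ℝ) : EReal) :=
  sInf_le ⟨c, b, hc, h, rfl⟩

lemma le_dominatedRisk {r : EReal}
    (h : ∀ c b : ℝ, 0 ≤ c → (Z ≤ᵐ[P] fun ω => c * X ω + b) → r ≤ ((c * a + b : ℝ) : EReal)) :
    r ≤ dominatedRisk P X a Z :=
  le_sInf fun _ ⟨c, b, hc, hZ, hr⟩ => hr ▸ h c b hc hZ

lemma dominatedRisk_self_le : dominatedRisk P X a X ≤ a := by
  simpa using dominatedRisk_le (P := P) (X := X) (a := a) (Z := X) (c := 1) (b := 0) zero_le_one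
    (Eventually.of_forall fun ω => by simp)

lemma dominatedRisk_mono (h : Z ≤ᵐ[P] Y) : dominatedRisk P X a Z ≤ dominatedRisk P X a Y :=
  sInf_le_sInf fun _ ⟨c, b, hc, hY, hr⟩ => ⟨c, b, hc, h.trans hY, hr⟩

lemma dominatedRisk_congr (h : Z =ᵐ[P] Y) : dominatedRisk P X a Z = dominatedRisk P X a Y :=
  (dominatedRisk_mono h.le).antisymm (dominatedRisk_mono h.symm.le)

lemma dominatedRisk_mul_add {c d : ℝ} (hc : 0 < c) :
    dominatedRisk P X a (fun ω => c * Z ω + d) = c * dominatedRisk P X a Z + d := by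
  set g : EReal → EReal := fun r => c * r + d
  have hg : Monotone g := fun r s h => add_le_add_left
    (mul_le_mul_of_nonneg_left h (EReal.coe_nonneg.2 hc.le)) _
  have hgc : Continuous g := (EReal.continuous_add_coe d).comp (EReal.continuous_coe_mul hc.ne')
  have hgtop : g ⊤ = ⊤ := by simp [g, EReal.coe_mul_top_of_pos hc]
  have hgcoe : ∀ x : ℝ, g x = ((c * x + d : ℝ) : EReal) := fun x => by simp [g]
  change _ = g (sInf _)
  rw [hg.map_sInf_of_continuousAt hgc.continuousAt hgtop]
  refine congrArg sInf (Set.ext fun r => ?_)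
  constructor
  · rintro ⟨c', b', hc', hZ, rfl⟩
    refine ⟨_, ⟨c' / c, (b' - d) / c, by positivity, ?_, rfl⟩, ?_⟩
    · filter_upwards [hZ] with ω hω
      rw [div_mul_eq_mul_div, ← add_div, le_div_iff₀ hc]
      linarith
    · rw [hgcoe]
      congr 1
      field_simp
      ring
  · rintro ⟨_, ⟨c', b', hc', hZ, rfl⟩, rfl⟩
    refine ⟨c * c', c * b' + d, by positivity, ?_, by rw [hgcoe]; ring_nf⟩
    filter_upwards [hZ] with ω hω
    nlinarith

lemma dominatedRisk_smul {c : ℝ} (hc : 0 < c) :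
    dominatedRisk P X a (c • Z) = c * dominatedRisk P X a Z := by
  show dominatedRisk P X a (fun ω => c * Z ω) = _
  simpa using dominatedRisk_mul_add (P := P) (X := X) (a := a) (Z := Z) (d := 0) hc

lemma dominatedRisk_add_const (d : ℝ) :
    dominatedRisk P X a (fun ω => Z ω + d) = dominatedRisk P X a Z + d := by
  simpa using dominatedRisk_mul_add (P := P) (X := X) (a := a) (Z := Z) (d := d) one_pos

lemma dominatedRisk_add_le (hZ : dominatedRisk P X a Z ≠ ⊥) (hY : dominatedRisk P X a Y ≠ ⊥) :
    dominatedRisk P X a (Z + Y) ≤ dominatedRisk P X a Z + dominatedRisk P X a Y := by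
  refine EReal.le_add_of_forall_gt (Or.inl hZ) (Or.inr hY) fun r hr s hs => ?_
  obtain ⟨_, ⟨c, b, hc, hZc, rfl⟩, hcr⟩ := sInf_lt_iff.1 hr
  obtain ⟨_, ⟨c', b', hc', hYc, rfl⟩, hcs⟩ := sInf_lt_iff.1 hs
  calc dominatedRisk P X a (Z + Y) ≤ (((c + c') * a + (b + b') : ℝ) : EReal) :=
        dominatedRisk_le (add_nonneg hc hc') <| by
          filter_upwards [hZc, hYc] with ω h h'
          simp only [Pi.add_apply]
          linarith
    _ = ((c * a + b : ℝ) : EReal) + ((c' * a + b' : ℝ) : EReal) := by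
        rw [← EReal.coe_add]; ring_nf
    _ ≤ r + s := add_le_add hcr.le hcs.le

end DominatedRisk

section CoherentEnvelope

variable {P : Measure Ω} [IsFiniteMeasure P] {p : ℝ≥0∞} [Fact (1 ≤ p)]

lemma isCoherentRiskMeasure_lscEnvelope_dominatedRisk (X : Lp ℝ p P) (a : ℝ)
    {f : Lp ℝ p P → ℝ} (hf : Continuous f)
    (hle : ∀ Z : Lp ℝ p P, (f Z : EReal) ≤ dominatedRisk P X a Z) :
    IsCoherentRiskMeasure P p (lscEnvelope fun Z : Lp ℝ p P => dominatedRisk P X a Z) := by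
  set ρ₀ : Lp ℝ p P → EReal := fun Z => dominatedRisk P X a Z
  have hge : ∀ Z, (f Z : EReal) ≤ lscEnvelope ρ₀ Z :=
    (continuous_coe_real_ereal.comp hf).lowerSemicontinuous.le_lscEnvelope hle
  have hne : ∀ Z, lscEnvelope ρ₀ Z ≠ ⊥ := fun Z => ne_bot_of_le_ne_bot (EReal.coe_ne_bot _) (hge Z)
  refine ⟨hne, lowerSemicontinuous_lscEnvelope ρ₀, fun c hc Z => ?_, fun d Z => ?_,
    fun Z W hZW => ?_, fun U V => ?_⟩
  · have hρ₀ : ρ₀ ∘ Homeomorph.smulOfNeZero c hc.ne' = (fun r => (c : EReal) * r) ∘ ρ₀ :=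
      funext fun W => (dominatedRisk_congr (Lp.coeFn_smul c W)).trans (dominatedRisk_smul hc)
    rw [show c • Z = Homeomorph.smulOfNeZero c hc.ne' Z from rfl, lscEnvelope_homeomorph_apply, hρ₀,
      lscEnvelope_comp_left (fun r s h => mul_le_mul_of_nonneg_left h (EReal.coe_nonneg.2 hc.le))
        (EReal.continuous_coe_mul hc.ne')]
    rfl
  · set C : Lp ℝ p P := (memLp_const d).toLp fun _ => d
    have hρ₀ : ρ₀ ∘ Homeomorph.addRight C = (fun r => r + (d : EReal)) ∘ ρ₀ :=
      funext fun W => (dominatedRisk_congr ((Lp.coeFn_add W C).trans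
        ((MemLp.coeFn_toLp (memLp_const d)).mono fun ω hω => congrArg (W ω + ·) hω))).trans
        (dominatedRisk_add_const d)
    rw [show Z + C = Homeomorph.addRight C Z from rfl, lscEnvelope_homeomorph_apply, hρ₀,
      lscEnvelope_comp_left (fun r s h => add_le_add_left h _) (EReal.continuous_add_coe d)]
    rfl
  · have hρ₀ : ρ₀ ≤ ρ₀ ∘ Homeomorph.addRight (W - Z) := fun V => dominatedRisk_mono <| by
      filter_upwards [Lp.coeFn_add V (W - Z), Lp.coeFn_sub W Z, hZW] with ω h h' h''
      simp only [Homeomorph.coe_addRight, h, Pi.add_apply, h', Pi.sub_apply]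
      linarith
    calc lscEnvelope ρ₀ Z ≤ lscEnvelope (ρ₀ ∘ Homeomorph.addRight (W - Z)) Z :=
          lscEnvelope_mono hρ₀ Z
      _ = lscEnvelope ρ₀ (Z + (W - Z)) := (lscEnvelope_homeomorph_apply _ _ _).symm
      _ = lscEnvelope ρ₀ W := by rw [add_sub_cancel]
  · refine lscEnvelope_add_le (fun U V => ?_) (hne U) (hne V)
    have hne₀ : ∀ Z, ρ₀ Z ≠ ⊥ := fun Z => ne_bot_of_le_ne_bot (EReal.coe_ne_bot _) (hle Z)
    exact (dominatedRisk_congr (Lp.coeFn_add U V)).trans_le (dominatedRisk_add_le (hne₀ U) (hne₀ V))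

/-- Monotonicity, positive homogeneity and cash invariance, combined into one inequality. -/
def IsAffineMonotone (f : Lp ℝ p P → ℝ) : Prop :=
  ∀ (Z W : Lp ℝ p P) (c b : ℝ), 0 ≤ c → (Z : Ω → ℝ) ≤ᵐ[P] (fun ω => c * W ω + b) →
    f Z ≤ c * f W + b

theorem IsAffineMonotone.exists_isCoherentRiskMeasure {f : Lp ℝ p P → ℝ} (hf : IsAffineMonotone f)
    (hfc : Continuous f) (X : Lp ℝ p P) :
    ∃ ρ : Lp ℝ p P → EReal, IsCoherentRiskMeasure P p ρ ∧ (∀ Z, (f Z : EReal) ≤ ρ Z) ∧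
      ρ X = f X := by
  set ρ₀ : Lp ℝ p P → EReal := fun Z => dominatedRisk P X (f X) Z
  have hle : ∀ Z, (f Z : EReal) ≤ ρ₀ Z :=
    fun Z => le_dominatedRisk fun c b hc h => by exact_mod_cast hf Z X c b hc h
  have hge : ∀ Z, (f Z : EReal) ≤ lscEnvelope ρ₀ Z :=
    (continuous_coe_real_ereal.comp hfc).lowerSemicontinuous.le_lscEnvelope hle
  exact ⟨_, isCoherentRiskMeasure_lscEnvelope_dominatedRisk X (f X) hfc hle, hge,
    ((lscEnvelope_le _ X).trans dominatedRisk_self_le).antisymm (hge X)⟩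

end CoherentEnvelope

section VaR

variable {P : Measure Ω} {X Y : Ω → ℝ} {t : ℝ}

/-- `VaR P X t` is the `sInf` of this set, a junk value when the set is empty; for `t = 1` that
happens exactly when `X` is not essentially bounded above. -/
def VaRSet (P : Measure Ω) (X : Ω → ℝ) (t : ℝ) : Set ℝ :=
  {x | P {ω | x < X ω} ≤ ENNReal.ofReal (1 - t)}

lemma VaR_eq_sInf_VaRSet : VaR P X t = sInf (VaRSet P X t) := rfl

lemma VaR_congr (h : X =ᵐ[P] Y) (t : ℝ) : VaR P X t = VaR P Y t := by
  have hlt : ∀ x : ℝ, P {ω | x < X ω} = P {ω | x < Y ω} := fun x =>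
    measure_congr <| h.mono fun ω hω => congrArg (x < ·) hω
  simp only [VaR, hlt]

lemma tendsto_measure_natCast_lt [IsFiniteMeasure P] (hX : AEMeasurable X P) :
    Tendsto (fun n : ℕ => P {ω | (n : ℝ) < X ω}) atTop (𝓝 0) := by
  have h := tendsto_measure_iInter_atTop (μ := P) (s := fun n : ℕ => {ω | (n : ℝ) < X ω})
    (fun n => nullMeasurableSet_lt aemeasurable_const hX)
    (fun m n hmn ω (hω : (n : ℝ) < X ω) => show (m : ℝ) < X ω from (Nat.cast_le.2 hmn).trans_lt hω)
    ⟨0, measure_ne_top _ _⟩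
  have hempty : ⋂ n : ℕ, {ω | (n : ℝ) < X ω} = ∅ :=
    eq_empty_of_forall_notMem fun ω hω =>
      (exists_nat_ge (X ω)).elim fun n hn => (mem_iInter.1 hω n).not_ge hn
  rwa [hempty, measure_empty] at h

lemma nonempty_VaRSet_of_lt_one [IsFiniteMeasure P] (hX : AEMeasurable X P) (ht : t < 1) :
    (VaRSet P X t).Nonempty := by
  have hpos : 0 < ENNReal.ofReal (1 - t) := ENNReal.ofReal_pos.2 (by linarith)
  obtain ⟨n, hn⟩ := ((tendsto_measure_natCast_lt hX).eventually (gt_mem_nhds hpos)).exists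
  exact ⟨n, hn.le⟩

lemma bddBelow_VaRSet [IsProbabilityMeasure P] (ht : 0 < t) : BddBelow (VaRSet P X t) := by
  have hunion : ⋃ n : ℕ, {ω | -(n : ℝ) < X ω} = univ :=
    eq_univ_of_forall fun ω => mem_iUnion.2 <|
      (exists_nat_gt (-X ω)).elim fun n hn => ⟨n, neg_lt.1 hn⟩
  have h := tendsto_measure_iUnion_atTop (μ := P) (s := fun n : ℕ => {ω | -(n : ℝ) < X ω})
    fun m n hmn ω (hω : -(m : ℝ) < X ω) =>
      show -(n : ℝ) < X ω from (neg_le_neg (Nat.cast_le.2 hmn)).trans_lt hω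
  rw [hunion, measure_univ] at h
  have hlt : ENNReal.ofReal (1 - t) < 1 := ENNReal.ofReal_lt_one.2 (by linarith)
  obtain ⟨n, hn⟩ := (h.eventually (lt_mem_nhds hlt)).exists
  refine ⟨-(n : ℝ), fun x hx => not_lt.1 fun hxn => ?_⟩
  exact (hn.trans_le (measure_mono fun ω hω => hxn.trans hω)).not_ge hx

lemma VaR_le_mul_add {c b : ℝ} (hc : 0 ≤ c) (h : X ≤ᵐ[P] fun ω => c * Y ω + b)
    (hX : BddBelow (VaRSet P X t)) (hY : (VaRSet P Y t).Nonempty) :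
    VaR P X t ≤ c * VaR P Y t + b := by
  have hmem : ∀ y ∈ VaRSet P Y t, c * y + b ∈ VaRSet P X t := fun y hy =>
    (measure_mono_ae <| h.mono fun ω hω (hlt : c * y + b < X ω) =>
      show y < Y ω from lt_of_mul_lt_mul_left (by linarith) hc).trans hy
  rw [VaR_eq_sInf_VaRSet, VaR_eq_sInf_VaRSet, ← smul_eq_mul, ← Real.sInf_smul_of_nonneg hc,
    ← sub_le_iff_le_add]
  refine le_csInf (hY.smul_set) ?_
  rintro _ ⟨y, hy, rfl⟩
  exact sub_le_iff_le_add.2 (csInf_le hX (hmem y hy))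

lemma VaR_nonneg [IsProbabilityMeasure P] (h : 0 ≤ᵐ[P] X) (ht : 0 < t) : 0 ≤ VaR P X t := by
  refine Real.sInf_nonneg fun x hx => not_lt.1 fun hx0 => ?_
  have hfull : P {ω | x < X ω} = 1 :=
    le_antisymm prob_le_one <| (measure_univ (μ := P)).symm.trans_le <|
      measure_mono_ae <| h.mono fun ω hω _ => hx0.trans_le hω
  have hx' : P {ω | x < X ω} ≤ ENNReal.ofReal (1 - t) := hx
  exact (ENNReal.ofReal_lt_one.2 (by linarith)).not_ge (hfull ▸ hx')

lemma VaR_one_indicator {E : Set Ω} (hE : P E ≠ 0) {a : ℝ} (ha : 0 ≤ a) :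
    VaR P (E.indicator fun _ => a) 1 = a := by
  have hset : VaRSet P (E.indicator fun _ => a) 1 = Ici a := by
    ext x
    simp only [VaRSet, mem_ofPred_eq, sub_self, ENNReal.ofReal_zero, nonpos_iff_eq_zero, mem_Ici]
    refine ⟨fun hx => not_lt.1 fun hxa => hE (measure_mono_null (fun ω hω => ?_) hx),
      fun hax => ?_⟩
    · simpa [indicator_of_mem hω] using hxa
    · convert measure_empty (μ := P)
      exact eq_empty_of_forall_notMem fun ω hω =>
        (indicator_le_self' (fun _ _ => ha) ω).trans hax |>.not_gt hω
  rw [VaR_eq_sInf_VaRSet, hset, csInf_Ici]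

end VaR

namespace DistortionKernel

variable (K : DistortionKernel)

lemma measure_Ioc_zero_one : K.toStieltjes.measure (Ioc 0 1) = 1 := by
  rw [StieltjesFunction.measure_Ioc, K.one_of_one_le 1 le_rfl, K.zero_of_nonpos 0 le_rfl,
    sub_zero, ENNReal.ofReal_one]

instance : IsProbabilityMeasure (K.toStieltjes.measure.restrict (Ioc 0 1)) :=
  ⟨by rw [Measure.restrict_apply_univ, measure_Ioc_zero_one]⟩

end DistortionKernel

section DistortionRisk

variable {P : Measure Ω} [IsProbabilityMeasure P] {K : DistortionKernel}

lemma measure_one_mul_VaR_one_le_distortionRisk {X : Ω → ℝ}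
    (hint : IntegrableOn (VaR P X) (Ioc 0 1) K.toStieltjes.measure) (hX : 0 ≤ᵐ[P] X) :
    (K.toStieltjes.measure {1}).toReal * VaR P X 1 ≤ distortionRisk P K X := by
  have hnonneg : 0 ≤ᵐ[K.toStieltjes.measure.restrict (Ioc 0 1)] VaR P X :=
    ae_restrict_of_forall_mem measurableSet_Ioc fun t ht => VaR_nonneg hX ht.1
  calc (K.toStieltjes.measure {1}).toReal * VaR P X 1
      = ∫ t in {1}, VaR P X t ∂K.toStieltjes.measure := by
        rw [Measure.restrict_singleton, integral_smul_measure, integral_dirac, smul_eq_mul]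
    _ ≤ distortionRisk P K X :=
        setIntegral_mono_set hint hnonneg
          (singleton_subset_iff.2 (right_mem_Ioc.2 one_pos)).eventuallyLE

variable {p : ℝ≥0∞} [Fact (1 ≤ p)]

/-- `ρ_Φ(a 1_E) ≥ dΦ({1}) a` for every `E` of positive measure, while `a 1_E → 0` in `Lᵖ` along
the sets `E = {W > n}`, whose measures are positive and tend to `0`. -/
lemma measure_singleton_one_eq_zero_of_VaRSet_eq_empty (hp : p ≠ ∞)
    (hfin : ∀ X : Lp ℝ p P,
      IntegrableOn (fun t => VaR P (⇑X) t) (Ioc 0 1) K.toStieltjes.measure)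
    (hcont : ContinuousAt (fun X : Lp ℝ p P => distortionRisk P K ⇑X) 0)
    {W : Lp ℝ p P} (hW : VaRSet P W 1 = ∅) : K.toStieltjes.measure {1} = 0 := by
  by_contra hne
  set δ := (K.toStieltjes.measure {1}).toReal
  have hδ : 0 < δ := ENNReal.toReal_pos hne isCompact_singleton.measure_lt_top.ne
  set r₀ := distortionRisk P K ⇑(0 : Lp ℝ p P)
  set a := (|r₀| + 1) / δ
  have ha : 0 < a := by positivity
  set E : ℕ → Set Ω := fun n => toMeasurable P {ω | (n : ℝ) < W ω}
  have hE : ∀ n, P (E n) ≠ 0 := fun n h0 =>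
    (eq_empty_iff_forall_notMem.1 hW) n (by simpa [VaRSet, E, measure_toMeasurable] using h0)
  set Z : ℕ → Lp ℝ p P := fun n =>
    indicatorConstLp p (measurableSet_toMeasurable _ _) (measure_ne_top P (E n)) a
  have hZ : Tendsto Z atTop (𝓝 0) := by
    rw [← indicatorConstLp_empty (p := p) (μ := P) (c := a)]
    refine tendsto_indicatorConstLp_set hp ?_
    simpa [E, measure_toMeasurable, ← bot_eq_empty, symmDiff_bot] using
      tendsto_measure_natCast_lt (Lp.aestronglyMeasurable W).aemeasurable
  have hlow : ∀ n, |r₀| + 1 ≤ distortionRisk P K (Z n) := fun n => by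
    calc |r₀| + 1 = δ * VaR P ((E n).indicator fun _ => a) 1 := by
          rw [VaR_one_indicator (hE n) ha.le, mul_div_cancel₀ _ hδ.ne']
      _ = δ * VaR P (Z n) 1 := by rw [VaR_congr indicatorConstLp_coeFn]
      _ ≤ distortionRisk P K (Z n) :=
          measure_one_mul_VaR_one_le_distortionRisk (hfin _) <|
            indicatorConstLp_coeFn.mono fun ω hω => hω ▸ indicator_nonneg (fun _ _ => ha.le) ω
  have := ge_of_tendsto (hcont.tendsto.comp hZ) (Eventually.of_forall hlow)
  linarith [le_abs_self r₀]

lemma ae_nonempty_VaRSet (hp : p ≠ ∞)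
    (hfin : ∀ X : Lp ℝ p P,
      IntegrableOn (fun t => VaR P (⇑X) t) (Ioc 0 1) K.toStieltjes.measure)
    (hcont : Continuous fun X : Lp ℝ p P => distortionRisk P K ⇑X) :
    ∀ᵐ t ∂K.toStieltjes.measure.restrict (Ioc 0 1), ∀ W : Lp ℝ p P, (VaRSet P W t).Nonempty := by
  by_cases h : ∀ W : Lp ℝ p P, (VaRSet P W 1).Nonempty
  · refine ae_restrict_of_forall_mem measurableSet_Ioc fun t ht W => ?_
    rcases ht.2.lt_or_eq with ht1 | rfl
    · exact nonempty_VaRSet_of_lt_one (Lp.aestronglyMeasurable W).aemeasurable ht1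
    · exact h W
  · obtain ⟨W, hW⟩ := not_forall.1 h
    rw [not_nonempty_iff_eq_empty] at hW
    have hne1 : ∀ᵐ t ∂K.toStieltjes.measure.restrict (Ioc 0 1), t ≠ 1 :=
      ae_restrict_of_ae <| measure_eq_zero_iff_ae_notMem.1 <|
        measure_singleton_one_eq_zero_of_VaRSet_eq_empty hp hfin hcont.continuousAt hW
    filter_upwards [hne1, ae_restrict_mem measurableSet_Ioc] with t ht1 ht W
    exact nonempty_VaRSet_of_lt_one (Lp.aestronglyMeasurable W).aemeasurable (ht.2.lt_of_ne ht1)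

lemma isAffineMonotone_distortionRisk (hp : p ≠ ∞)
    (hfin : ∀ X : Lp ℝ p P,
      IntegrableOn (fun t => VaR P (⇑X) t) (Ioc 0 1) K.toStieltjes.measure)
    (hcont : Continuous fun X : Lp ℝ p P => distortionRisk P K ⇑X) :
    IsAffineMonotone fun X : Lp ℝ p P => distortionRisk P K X := by
  intro Z W c b hc h
  have hVaR : ∀ᵐ t ∂K.toStieltjes.measure.restrict (Ioc 0 1),
      VaR P Z t ≤ c * VaR P W t + b := by
    filter_upwards [ae_nonempty_VaRSet hp hfin hcont, ae_restrict_mem measurableSet_Ioc]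
      with t hne ht
    exact VaR_le_mul_add hc h (bddBelow_VaRSet ht.1) (hne W)
  calc distortionRisk P K Z ≤ ∫ t in Ioc 0 1, (c * VaR P W t + b) ∂K.toStieltjes.measure :=
        integral_mono_ae (hfin Z) (((hfin W).const_mul c).add (integrable_const b)) hVaR
    _ = c * distortionRisk P K W + b := by
        rw [integral_add ((hfin W).const_mul c) (integrable_const b), integral_const_mul,
          integral_const, probReal_univ, one_smul]
        rfl

end DistortionRisk

theorem stmt3_general (P : Measure Ω) [IsProbabilityMeasure P]
    (p : ℝ≥0∞) [Fact (1 ≤ p)] (hp : p ≠ ∞)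
    (K : DistortionKernel)
    (hfin : ∀ X : Lp ℝ p P,
      IntegrableOn (fun t => VaR P (⇑X) t) (Set.Ioc 0 1) K.toStieltjes.measure)
    (hcont : Continuous fun X : Lp ℝ p P => distortionRisk P K ⇑X)
    (X : Lp ℝ p P) :
    IsLeast
      {r : EReal | ∃ ρ : Lp ℝ p P → EReal, IsCoherentRiskMeasure P p ρ ∧
        (∀ Z : Lp ℝ p P, ((distortionRisk P K ⇑Z : ℝ) : EReal) ≤ ρ Z) ∧ ρ X = r}
      ((distortionRisk P K ⇑X : ℝ) : EReal) := by
  obtain ⟨ρ, hρ, hle, hρX⟩ :=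
    (isAffineMonotone_distortionRisk hp hfin hcont).exists_isCoherentRiskMeasure hcont X
  exact ⟨⟨ρ, hρ, hle, hρX⟩, fun _ ⟨_, _, hle', hr⟩ => hr ▸ hle' X⟩

theorem stmt3 (P : Measure Ω) [IsProbabilityMeasure P]
    (p : ℝ≥0∞) [Fact (1 ≤ p)] (hp : p ≠ ∞)
    (K : DistortionKernel)
    (hfin : ∀ X : Lp ℝ p P,
      IntegrableOn (fun t => VaR P (⇑X) t) (Set.Ioc 0 1) K.toStieltjes.measure)
    (hcont : Continuous fun X : Lp ℝ p P => distortionRisk P K ⇑X)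
    (X : Lp ℝ p P) (M : ℝ) (hbd : ∀ᵐ ω ∂P, M ≤ X ω) :
    IsLeast
      {r : EReal | ∃ ρ : Lp ℝ p P → EReal, IsCoherentRiskMeasure P p ρ ∧
        (∀ Z : Lp ℝ p P, ((distortionRisk P K ⇑Z : ℝ) : EReal) ≤ ρ Z) ∧ ρ X = r}
      ((distortionRisk P K ⇑X : ℝ) : EReal) :=
  stmt3_general P p hp K hfin hcont X
end
end

section
/- Let ρ₁, …, ρₙ be distortion risk measures that are finite and norm-continuous on Lᵖ (p ∈ [1, ∞) with conjugate exponent q), let λ₁, …, λₙ > 0, let M₁, …, Mₙ be closed convex cones in Lᵖ, and let X₀ ∈ Lᵖ be bounded below. Write ρᵢ^{Mᵢ}(X) = ρᵢ(X) if X ∈ Mᵢ and +∞ otherwise. If an allocation (X₁, …, Xₙ) with X₁ + ⋯ + Xₙ = X₀ minimizes Σᵢ λᵢ ρᵢ^{Mᵢ}(Xᵢ) over all allocations of X₀ (with finite minimal value), then there exists Y ∈ L^q such that λᵢ ρᵢ^{Mᵢ}(Xᵢ) = E(Xᵢ Y) for each i = 1, …, n. -/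
/-!
At an optimum every `Xᵢ` lies in `Mᵢ`, so the costs `cᵢ = λᵢ ρᵢ(Xᵢ)` are finite. If
`∑ aᵢ Xᵢ = 0`, then for small `|t|` the rescaled family `(1 + t aᵢ) Xᵢ` is again an allocation of
`X₀` inside the cones, and by positive homogeneity of `ρᵢ` its cost is `∑ cᵢ + t ∑ aᵢ cᵢ`;
optimality forces `∑ aᵢ cᵢ = 0`. Thus `c` satisfies every linear relation among the `Xᵢ`, and
since the pairing `E(XY)` of `Lᵖ` with `L^q` separates points, finite-dimensional duality yields
`Y ∈ L^q` with `E(Xᵢ Y) = cᵢ` for all `i`.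
-/

open MeasureTheory Filter
open scoped ENNReal Pointwise Classical

noncomputable section

variable {Ω : Type*} [MeasurableSpace Ω]

/-- `ψ^M`: the function `ψ` restricted to the set `M` (equal to `+∞` off `M`). -/
def restrictFn {P : Measure Ω} {p : ℝ≥0∞} (ψ : Lp ℝ p P → EReal) (M : Set (Lp ℝ p P)) :
    Lp ℝ p P → EReal :=
  fun X => if X ∈ M then ψ X else ⊤


theorem EReal.coe_finset_sum {ι : Type*} (s : Finset ι) (f : ι → ℝ) :
    ((∑ i ∈ s, f i : ℝ) : EReal) = ∑ i ∈ s, (f i : EReal) :=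
  map_sum (⟨⟨Real.toEReal, EReal.coe_zero⟩, EReal.coe_add⟩ : ℝ →+ EReal) f s

theorem EReal.finset_sum_eq_top {ι : Type*} {s : Finset ι} {f : ι → EReal}
    (hbot : ∀ j ∈ s, f j ≠ ⊥) {i : ι} (hi : i ∈ s) (htop : f i = ⊤) : ∑ j ∈ s, f j = ⊤ := by
  classical
  rw [← Finset.add_sum_erase s f hi, htop]
  refine EReal.top_add_of_ne_bot (Finset.sum_induction f (· ≠ ⊥)
    (fun _ _ ha hb => EReal.add_ne_bot_iff.2 ⟨ha, hb⟩) EReal.zero_ne_bot ?_)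
  exact fun j hj => hbot j (Finset.mem_of_mem_erase hj)

theorem exists_forall_apply_eq_of_sum_smul_eq_zero {K E F ι : Type*} [Field K] [AddCommGroup E]
    [Module K E] [AddCommGroup F] [Module K F] [Fintype ι] [DecidableEq ι]
    (B : F →ₗ[K] E →ₗ[K] K) (hB : ∀ x, (∀ y, B y x = 0) → x = 0) (x : ι → E) (c : ι → K)
    (hc : ∀ a : ι → K, ∑ i, a i • x i = 0 → ∑ i, a i * c i = 0) :
    ∃ y, ∀ i, B y (x i) = c i := by
  let T : F →ₗ[K] ι → K := LinearMap.pi fun i => B.flip (x i)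
  by_contra! hne
  have hcT : c ∉ LinearMap.range T := by
    rintro ⟨y, hy⟩
    obtain ⟨i, hi⟩ := hne y
    exact hi (congr_fun hy i)
  obtain ⟨f, hfc, hker⟩ := Submodule.exists_le_ker_of_notMem hcT
  set a : ι → K := fun i => f (Pi.single i 1)
  have hf : ∀ v, f v = ∑ i, a i * v i := fun v => by
    conv_lhs => rw [← Finset.univ_sum_single v]
    simp only [map_sum, a]
    refine Finset.sum_congr rfl fun i _ => ?_
    rw [mul_comm, ← smul_eq_mul, ← map_smul, ← Pi.single_smul, smul_eq_mul, mul_one]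
  have hrel : ∑ i, a i • x i = 0 := hB _ fun y => by
    simpa [hf, mul_comm, T] using hker (LinearMap.mem_range_self T y)
  exact hfc (by rw [hf, hc a hrel])

theorem sum_mul_eq_zero_of_forall_sum_le {ι : Type*} [Fintype ι] (a c : ι → ℝ)
    (h : ∀ t : ℝ, (∀ i, 0 < 1 + t * a i) → ∑ i, c i ≤ ∑ i, (1 + t * a i) * c i) :
    ∑ i, a i * c i = 0 := by
  have hev : ∀ᶠ t in nhds (0 : ℝ), ∀ i, 0 < 1 + t * a i := Filter.eventually_all.2 fun i =>
    (by fun_prop : Continuous fun t : ℝ => 1 + t * a i).continuousAt.eventually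
      (lt_mem_nhds (by norm_num : (0 : ℝ) < 1 + 0 * a i))
  obtain ⟨ε, hε, hball⟩ := Metric.eventually_nhds_iff.1 hev
  have hlin : ∀ t, ∑ i, (1 + t * a i) * c i = ∑ i, c i + t * ∑ i, a i * c i := fun t => by
    simp only [add_mul, one_mul, Finset.sum_add_distrib, Finset.mul_sum, mul_assoc]
  have hpos := h (ε / 2) (hball (by rw [Real.dist_0_eq_abs, abs_of_pos (by positivity)]; linarith))
  have hneg := h (-(ε / 2)) (hball (by
    rw [Real.dist_0_eq_abs, abs_neg, abs_of_pos (by positivity)]; linarith))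
  rw [hlin] at hpos hneg
  nlinarith

section Distortion

variable {P : Measure Ω}

theorem VaR_congr_ae {X Y : Ω → ℝ} (h : X =ᵐ[P] Y) : VaR P X = VaR P Y := by
  ext t
  have hsets : ∀ x : ℝ, P {ω | x < X ω} = P {ω | x < Y ω} := fun x =>
    measure_congr (h.mono fun ω hω => by change (x < X ω) = (x < Y ω); rw [hω])
  simp only [VaR, hsets]

theorem VaR_const_mul (X : Ω → ℝ) {c : ℝ} (hc : 0 < c) (t : ℝ) :
    VaR P (fun ω => c * X ω) t = c * VaR P X t := by
  have hset : {x : ℝ | P {ω | x < c * X ω} ≤ ENNReal.ofReal (1 - t)}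
      = c • {x : ℝ | P {ω | x < X ω} ≤ ENNReal.ofReal (1 - t)} := by
    ext x
    simp only [Set.mem_smul_set_iff_inv_smul_mem₀ hc.ne', Set.mem_ofPred_eq, smul_eq_mul,
      ← div_lt_iff₀' hc, div_eq_inv_mul]
  rw [VaR, VaR, hset, Real.sInf_smul_of_nonneg hc.le, smul_eq_mul]

theorem distortionRisk_const_mul (K : DistortionKernel) (X : Ω → ℝ) {c : ℝ} (hc : 0 < c) :
    distortionRisk P K (fun ω => c * X ω) = c * distortionRisk P K X := by
  simp only [distortionRisk, VaR_const_mul X hc, integral_const_mul]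

theorem distortionRisk_Lp_smul {p : ℝ≥0∞} (K : DistortionKernel) (X : Lp ℝ p P) {c : ℝ}
    (hc : 0 < c) : distortionRisk P K ⇑(c • X) = c * distortionRisk P K ⇑X := by
  rw [distortionRisk, VaR_congr_ae (Lp.coeFn_smul c X)]
  exact distortionRisk_const_mul K X hc

end Distortion

section Restrict

variable {P : Measure Ω} {p : ℝ≥0∞} {n : ℕ} {lam : Fin n → ℝ} {ψ : Fin n → Lp ℝ p P → ℝ}
  {M : Fin n → Set (Lp ℝ p P)} {X : Fin n → Lp ℝ p P}

theorem coe_mul_restrictFn_of_mem (l : ℝ) {φ : Lp ℝ p P → ℝ} {N : Set (Lp ℝ p P)}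
    {W : Lp ℝ p P} (hW : W ∈ N) :
    (l : EReal) * restrictFn (fun Z => (φ Z : EReal)) N W = ((l * φ W : ℝ) : EReal) := by
  rw [restrictFn, if_pos hW, EReal.coe_mul]

theorem sum_coe_mul_restrictFn_of_mem (hX : ∀ i, X i ∈ M i) :
    ∑ i, (lam i : EReal) * restrictFn (fun Z => (ψ i Z : EReal)) (M i) (X i) =
      ((∑ i, lam i * ψ i (X i) : ℝ) : EReal) := by
  rw [EReal.coe_finset_sum]
  exact Finset.sum_congr rfl fun i _ => coe_mul_restrictFn_of_mem _ (hX i)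

theorem mem_of_sum_coe_mul_restrictFn_ne_top (hlam : ∀ i, 0 < lam i)
    (h : ∑ i, (lam i : EReal) * restrictFn (fun Z => (ψ i Z : EReal)) (M i) (X i) ≠ ⊤)
    (i : Fin n) : X i ∈ M i := by
  have hterm : ∀ j, X j ∉ M j →
      (lam j : EReal) * restrictFn (fun Z => (ψ j Z : EReal)) (M j) (X j) = ⊤ := fun j hj => by
    rw [restrictFn, if_neg hj, EReal.coe_mul_top_of_pos (hlam j)]
  have hbot : ∀ j, (lam j : EReal) * restrictFn (fun Z => (ψ j Z : EReal)) (M j) (X j) ≠ ⊥ :=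
    fun j => by
      by_cases hj : X j ∈ M j
      · rw [coe_mul_restrictFn_of_mem _ hj]; exact EReal.coe_ne_bot _
      · rw [hterm j hj]; exact top_ne_bot
  by_contra hi
  exact h (EReal.finset_sum_eq_top (fun j _ => hbot j) (Finset.mem_univ i) (hterm i hi))

end Restrict

theorem MeasureTheory.Lp.eq_zero_of_forall_integral_mul_eq_zero {P : Measure Ω}
    [IsFiniteMeasure P] {p : ℝ≥0∞} [Fact (1 ≤ p)] (q : ℝ≥0∞) (X : Lp ℝ p P)
    (h : ∀ Y : Lp ℝ q P, ∫ ω, X ω * Y ω ∂P = 0) : X = 0 := by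
  refine Lp.eq_zero_iff_ae_eq_zero.2 <|
    ((Lp.memLp X).integrable Fact.out).ae_eq_zero_of_forall_setIntegral_eq_zero fun s hs _ => ?_
  rw [← h (indicatorConstLp q hs (measure_ne_top P s) 1), ← integral_indicator hs]
  refine integral_congr_ae ?_
  filter_upwards [indicatorConstLp_coeFn (p := q) (hs := hs) (hμs := measure_ne_top P s)
    (c := (1 : ℝ))] with ω hω
  by_cases hω' : ω ∈ s <;> simp [hω, hω']

theorem stmt5_general (P : Measure Ω) [IsProbabilityMeasure P]
    (p q : ℝ≥0∞) [Fact (1 ≤ p)] (hpq : 1 / p + 1 / q = 1)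
    (n : ℕ) (K : Fin n → DistortionKernel)
    (lam : Fin n → ℝ) (hlam : ∀ i, 0 < lam i)
    (M : Fin n → Set (Lp ℝ p P))
    (hMcone : ∀ i (c : ℝ), 0 < c → ∀ X ∈ M i, c • X ∈ M i)
    (X₀ : Lp ℝ p P)
    (Xs : Fin n → Lp ℝ p P) (hXs : ∑ i, Xs i = X₀)
    (hopt : ∀ Ys : Fin n → Lp ℝ p P, ∑ i, Ys i = X₀ →
      ∑ i, (lam i : EReal) *
          restrictFn (fun Z => ((distortionRisk P (K i) ⇑Z : ℝ) : EReal)) (M i) (Xs i) ≤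
        ∑ i, (lam i : EReal) *
          restrictFn (fun Z => ((distortionRisk P (K i) ⇑Z : ℝ) : EReal)) (M i) (Ys i))
    (hval : ∑ i, (lam i : EReal) *
        restrictFn (fun Z => ((distortionRisk P (K i) ⇑Z : ℝ) : EReal)) (M i) (Xs i) ≠ ⊤) :
    ∃ Y : Lp ℝ q P, ∀ i,
      (lam i : EReal) *
          restrictFn (fun Z => ((distortionRisk P (K i) ⇑Z : ℝ) : EReal)) (M i) (Xs i) =
        ((∫ ω, Xs i ω * Y ω ∂P : ℝ) : EReal) := by
  have hmem : ∀ i, Xs i ∈ M i := mem_of_sum_coe_mul_restrictFn_ne_top hlam hval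
  set c : Fin n → ℝ := fun i => lam i * distortionRisk P (K i) ⇑(Xs i)
  have hrel : ∀ a : Fin n → ℝ, ∑ i, a i • Xs i = 0 → ∑ i, a i * c i = 0 := by
    intro a ha
    refine sum_mul_eq_zero_of_forall_sum_le a c fun t ht => ?_
    have hscaled : ∑ i, (1 + t * a i) • Xs i = X₀ := by
      simp only [add_smul, one_smul, mul_smul, Finset.sum_add_distrib, ← Finset.smul_sum, ha,
        smul_zero, add_zero, hXs]
    have hle := hopt _ hscaled
    rw [sum_coe_mul_restrictFn_of_mem hmem,
      sum_coe_mul_restrictFn_of_mem fun i => hMcone i _ (ht i) _ (hmem i),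
      EReal.coe_le_coe_iff] at hle
    simpa only [distortionRisk_Lp_smul _ _ (ht _), c, mul_left_comm] using hle
  have : ENNReal.HolderConjugate p q :=
    ENNReal.holderConjugate_iff.2 (by simpa only [one_div] using hpq)
  have : Fact (1 ≤ q) := ⟨ENNReal.HolderConjugate.one_le (p := q) (q := p)⟩
  let B := ((ContinuousLinearMap.mul ℝ ℝ).lpPairing P p q).flip.toLinearMap₁₂
  have hB : ∀ X Y, B Y X = ∫ ω, X ω * Y ω ∂P := fun X Y =>
    ContinuousLinearMap.lpPairing_eq_integral _ X Y
  obtain ⟨Y, hY⟩ := exists_forall_apply_eq_of_sum_smul_eq_zero B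
    (fun X hX => Lp.eq_zero_of_forall_integral_mul_eq_zero q X fun Y => hB X Y ▸ hX Y) Xs c hrel
  exact ⟨Y, fun i => by rw [coe_mul_restrictFn_of_mem _ (hmem i), ← hB, hY i]⟩

theorem stmt5 (P : Measure Ω) [IsProbabilityMeasure P]
    (p q : ℝ≥0∞) [Fact (1 ≤ p)] (hp : p ≠ ∞) (hpq : 1 / p + 1 / q = 1)
    (n : ℕ) (K : Fin n → DistortionKernel)
    (hfin : ∀ i (X : Lp ℝ p P),
      IntegrableOn (fun t => VaR P (⇑X) t) (Set.Ioc 0 1) (K i).toStieltjes.measure)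
    (hcont : ∀ i, Continuous fun X : Lp ℝ p P => distortionRisk P (K i) ⇑X)
    (lam : Fin n → ℝ) (hlam : ∀ i, 0 < lam i)
    (M : Fin n → Set (Lp ℝ p P))
    (hMclosed : ∀ i, IsClosed (M i)) (hMconvex : ∀ i, Convex ℝ (M i))
    (hMcone : ∀ i (c : ℝ), 0 < c → ∀ X ∈ M i, c • X ∈ M i)
    (X₀ : Lp ℝ p P) (mlb : ℝ) (hbd : ∀ᵐ ω ∂P, mlb ≤ X₀ ω)
    (Xs : Fin n → Lp ℝ p P) (hXs : ∑ i, Xs i = X₀)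
    (hopt : ∀ Ys : Fin n → Lp ℝ p P, ∑ i, Ys i = X₀ →
      ∑ i, (lam i : EReal) *
          restrictFn (fun Z => ((distortionRisk P (K i) ⇑Z : ℝ) : EReal)) (M i) (Xs i) ≤
        ∑ i, (lam i : EReal) *
          restrictFn (fun Z => ((distortionRisk P (K i) ⇑Z : ℝ) : EReal)) (M i) (Ys i))
    (hval : ∑ i, (lam i : EReal) *
        restrictFn (fun Z => ((distortionRisk P (K i) ⇑Z : ℝ) : EReal)) (M i) (Xs i) ≠ ⊤) :
    ∃ Y : Lp ℝ q P, ∀ i,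
      (lam i : EReal) *
          restrictFn (fun Z => ((distortionRisk P (K i) ⇑Z : ℝ) : EReal)) (M i) (Xs i) =
        ((∫ ω, Xs i ω * Y ω ∂P : ℝ) : EReal) :=
  stmt5_general P p q hpq n K lam hlam M hMcone X₀ Xs hXs hopt hval

end
end

section
/- Let α ∈ (0, 1) and suppose there exists A ∈ ℱ with 0 < P(A) < (1 − α)/2. Then for every X₀ ∈ L¹, the optimal allocation problem with ρ₁ = VaR_α and ρ₂ = E is unbounded: inf{VaR_α(X₁) + E(X₂) : X₁, X₂ ∈ L¹, X₁ + X₂ = X₀} = −∞. -/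
/-! Choose `x` with `P(X₀ > x) ≤ (1 - α)/2` and move an arbitrarily large sum `c` onto the
event `A`: `X₂ = -c·1_A`, `X₁ = X₀ + c·1_A`. Since `P(X₁ > x) ≤ P(X₀ > x) + P(A) ≤ 1 - α`,
`VaR_α(X₁)` stays bounded by `max x 0`, while `E X₂ = -c P(A) → -∞`. -/

open MeasureTheory Filter
open scoped ENNReal Pointwise Classical

noncomputable section

variable {Ω : Type*} [MeasurableSpace Ω]


/-- The distortion risk measure of a nonnegative risk, with values in `[0, +∞]`. -/
def distortionRiskE (P : Measure Ω) (K : DistortionKernel) (X : Ω → ℝ) : ℝ≥0∞ :=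
  ∫⁻ t in Set.Ioc (0 : ℝ) 1, ENNReal.ofReal (VaR P X t) ∂K.toStieltjes.measure


theorem tendsto_measure_lt_atTop {μ : Measure Ω} [IsFiniteMeasure μ] {X : Ω → ℝ}
    (hX : AEMeasurable X μ) : Tendsto (fun x : ℝ => μ {ω | x < X ω}) atTop (nhds 0) := by
  have hempty : (⋂ x : ℝ, {ω | x < X ω}) = ∅ :=
    Set.eq_empty_of_forall_notMem fun ω hω =>
      lt_irrefl (X ω) (Set.mem_iInter.1 hω (X ω))
  simpa [hempty, Function.comp_def] using tendsto_measure_iInter_atTop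
    (fun x => nullMeasurableSet_lt aemeasurable_const hX)
    (fun x y hxy ω (hω : y < X ω) => hxy.trans_lt hω) ⟨0, measure_ne_top μ _⟩

/-- The set defining `VaR` is an up-set, so when it is not bounded below it is all of `ℝ`
and its `sInf` takes the junk value `0`; hence the `max` with `0`. -/
theorem VaR_le_max {P : Measure Ω} {X : Ω → ℝ} {t x : ℝ}
    (hx : P {ω | x < X ω} ≤ ENNReal.ofReal (1 - t)) : VaR P X t ≤ max x 0 := by
  by_cases hbdd : BddBelow {x : ℝ | P {ω | x < X ω} ≤ ENNReal.ofReal (1 - t)}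
  · exact (csInf_le hbdd hx).trans (le_max_left _ _)
  · exact (Real.sInf_of_not_bddBelow hbdd).trans_le (le_max_right _ _)

theorem measure_lt_sub_indicator_le (μ : Measure Ω) (X : Ω → ℝ) (A : Set Ω) (f : Ω → ℝ)
    (x : ℝ) : μ {ω | x < X ω - A.indicator f ω} ≤ μ {ω | x < X ω} + μ A := by
  refine (measure_mono fun ω (hω : x < X ω - A.indicator f ω) => ?_).trans
    (measure_union_le _ _)
  by_cases hωA : ω ∈ A
  · exact Or.inr hωA
  · left
    simpa [Set.indicator_of_notMem hωA] using hω

theorem stmt9 (P : Measure Ω) [IsProbabilityMeasure P]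
    (α : ℝ) (hα : α ∈ Set.Ioo (0 : ℝ) 1)
    (A : Set Ω) (hA : MeasurableSet A) (hA0 : 0 < P A)
    (hA1 : P A < ENNReal.ofReal ((1 - α) / 2))
    (X₀ : Ω → ℝ) (hX₀ : Integrable X₀ P) :
    ¬ BddBelow {r : ℝ | ∃ X₁ X₂ : Ω → ℝ, Integrable X₁ P ∧ Integrable X₂ P ∧
        X₁ + X₂ = X₀ ∧ r = VaR P X₁ α + ∫ ω, X₂ ω ∂P} := by
  have hhalf : 0 < (1 - α) / 2 := by linarith [hα.2]
  have hε : 0 < ENNReal.ofReal ((1 - α) / 2) := ENNReal.ofReal_pos.2 hhalf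
  obtain ⟨x, hx⟩ :=
    ((tendsto_measure_lt_atTop hX₀.aemeasurable).eventually (gt_mem_nhds hε)).exists
  rintro ⟨b, hb⟩
  have hp : 0 < P.real A := ENNReal.toReal_pos hA0.ne' (measure_ne_top P A)
  set c := (max x 0 - b) / P.real A + 1
  set X₂ := A.indicator fun _ => -c
  have hX₂ : Integrable X₂ P := (integrable_const _).indicator hA
  have hVaR : VaR P (X₀ - X₂) α ≤ max x 0 := VaR_le_max <| calc
    P {ω | x < X₀ ω - X₂ ω} ≤ P {ω | x < X₀ ω} + P A := measure_lt_sub_indicator_le _ _ _ _ _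
    _ ≤ ENNReal.ofReal ((1 - α) / 2) + ENNReal.ofReal ((1 - α) / 2) := add_le_add hx.le hA1.le
    _ = ENNReal.ofReal (1 - α) := by rw [← ENNReal.ofReal_add hhalf.le hhalf.le]; ring_nf
  have hlow := hb ⟨X₀ - X₂, X₂, hX₀.sub hX₂, hX₂, sub_add_cancel _ _, rfl⟩
  rw [integral_indicator_const _ hA, smul_eq_mul] at hlow
  have hc : max x 0 - b < P.real A * c := by
    rw [mul_add, mul_div_cancel₀ _ hp.ne']; linarith
  linarith

end
end

section
/- Let Φ₁, …, Φₙ be distortion kernels with associated distortion risk measures ρ₁, …, ρₙ, each satisfying lim_{m→∞} ρᵢ(X ∧ m) = ρᵢ(X) for every nonnegative random variable X with ρᵢ(X) well defined, and let X₀ be a random variable with X₀ ≥ 0 a.s. and F_{X₀}(0) = 0. Then the co-monotone positive infimal convolution of ρ₁, …, ρₙ at X₀ equals the distortion risk measure with kernel Φ = max{Φ₁, …, Φₙ}: inf{Σᵢ ρᵢ(fᵢ(X₀)) : (f₁, …, fₙ) ∈ 𝔸ℂ} = ρ_Φ(X₀), where Φ(t) = max{Φ₁(t), …, Φₙ(t)}.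 -/
open MeasureTheory Filter
open scoped ENNReal Pointwise Classical

noncomputable section

variable {Ω : Type*} [MeasurableSpace Ω]


/-- The set `𝔸ℂ` of admissible (co-monotone) allocations: tuples of nondecreasing
nonnegative functions on `ℝ₊` vanishing at `0` and summing to the identity. -/
def IsAdmissible (n : ℕ) (f : Fin n → ℝ → ℝ) : Prop :=
  (∀ i, MonotoneOn (f i) (Set.Ici 0)) ∧ (∀ i x, 0 ≤ x → 0 ≤ f i x) ∧
    (∀ i, f i 0 = 0) ∧ ∀ x : ℝ, 0 ≤ x → ∑ i, f i x = x

/-- The regularity condition `lim_{m→∞} ρ_Φ(X ∧ m) = ρ_Φ(X)` for nonnegative risks. -/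
def ContinuityCondition (P : Measure Ω) (K : DistortionKernel) : Prop :=
  ∀ X : Ω → ℝ, Measurable X → (∀ ω, 0 ≤ X ω) →
    Filter.Tendsto (fun m : ℕ => distortionRiskE P K (fun ω => min (X ω) (m : ℝ)))
      Filter.atTop (nhds (distortionRiskE P K X))


/-!
For `X ≥ 0` let `ρ̃_Φ(X) = ∫₀^∞ (1 - Φ(F_X(s))) ds`, the distortion risk measure computed with the
`[0, ∞]`-valued quantile. It is additive along comonotone allocations (the quantiles of `f_i(X)`
are `f_i` of those of `X`) and antitone in `Φ`. The continuity condition gives `ρ_Φ = ρ̃_Φ`: the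
two differ only through the junk value `VaR_1 = 0` of an unbounded risk, which matters only when
`dΦ` has an atom at `1`, and then `ρ_Φ(X) = lim ρ_Φ(X ∧ m) ≥ lim m · dΦ{1} = ∞`. Hence
`ρ_max(X) ≤ ρ̃_max(X) = ∑ ρ̃_max(f_i(X)) ≤ ∑ ρ_i(f_i(X))` for every allocation.

Conversely, split `(0, ∞)` into sets `A_i` on which `Φ_i(F_X(s)) = Φ_max(F_X(s))` and give agent
`i` the increments of `X` at the levels in `A_i`, i.e. `f_i(x) = |A_i ∩ (0, x)|`. The quantiles of
`f_i(X)` are `|A_i ∩ {F_X < t}|`, so by Tonelli `ρ̃_i(f_i(X)) = ∫_{A_i} (1 - Φ_max(F_X(s))) ds`,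
and these sum to `ρ̃_max(X)`.
-/

open Set Topology

namespace DistortionKernel

variable (K : DistortionKernel)

lemma mono : Monotone K.toStieltjes := K.toStieltjes.mono

lemma apply_one : K.toStieltjes 1 = 1 := K.one_of_one_le 1 le_rfl

lemma measure_Ioc_one (a : ℝ) :
    K.toStieltjes.measure (Ioc a 1) = ENNReal.ofReal (1 - K.toStieltjes a) := by
  rw [StieltjesFunction.measure_Ioc, apply_one]

lemma measure_singleton_one :
    K.toStieltjes.measure {1} = ENNReal.ofReal (1 - Function.leftLim K.toStieltjes 1) := by
  rw [StieltjesFunction.measure_singleton, apply_one]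

variable {K} {K' : DistortionKernel}

lemma leftLim_one_mono (h : ∀ x, K.toStieltjes x ≤ K'.toStieltjes x) :
    Function.leftLim K.toStieltjes 1 ≤ Function.leftLim K'.toStieltjes 1 :=
  le_of_tendsto_of_tendsto (K.mono.tendsto_leftLim 1) (K'.mono.tendsto_leftLim 1)
    (Eventually.of_forall h)

lemma measure_singleton_one_le (h : ∀ x, K.toStieltjes x ≤ K'.toStieltjes x) :
    K'.toStieltjes.measure {1} ≤ K.toStieltjes.measure {1} := by
  rw [measure_singleton_one, measure_singleton_one]
  exact ENNReal.ofReal_le_ofReal (by linarith [leftLim_one_mono h])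

lemma measure_Ioo_one_le (h : ∀ x, K.toStieltjes x ≤ K'.toStieltjes x) {a : ℝ}
    (ha : K.toStieltjes a = K'.toStieltjes a) :
    K.toStieltjes.measure (Ioo a 1) ≤ K'.toStieltjes.measure (Ioo a 1) := by
  rw [StieltjesFunction.measure_Ioo, StieltjesFunction.measure_Ioo, ha]
  exact ENNReal.ofReal_le_ofReal (by linarith [leftLim_one_mono h])

end DistortionKernel

section cdf

variable (P : Measure Ω)

lemma cdf_nonneg (X : Ω → ℝ) (x : ℝ) : 0 ≤ cdf P X x := ENNReal.toReal_nonneg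

lemma cdf_eq_zero_of_neg {X : Ω → ℝ} (hX0 : ∀ ω, 0 ≤ X ω) {x : ℝ} (hx : x < 0) :
    cdf P X x = 0 := by
  have : {ω | X ω ≤ x} = ∅ := eq_empty_of_forall_notMem fun ω (hω : X ω ≤ x) => by
    linarith [hX0 ω]
  simp [cdf, this]

variable [IsFiniteMeasure P]

lemma cdf_le_cdf_of_imp {X Y : Ω → ℝ} {x y : ℝ} (h : ∀ ω, Y ω ≤ y → X ω ≤ x) :
    cdf P Y y ≤ cdf P X x :=
  ENNReal.toReal_mono (measure_ne_top P _) (measure_mono fun ω hω => h ω hω)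

lemma monotone_cdf (X : Ω → ℝ) : Monotone (cdf P X) := fun _ _ hxy =>
  cdf_le_cdf_of_imp P fun _ hω => hω.trans hxy

lemma measurable_cdf (X : Ω → ℝ) : Measurable (cdf P X) := (monotone_cdf P X).measurable

end cdf

section VaR

variable {P : Measure Ω} {X : Ω → ℝ} {t : ℝ}

lemma nonneg_of_le_cdf (hX0 : ∀ ω, 0 ≤ X ω) (ht : 0 < t) {x : ℝ} (hx : t ≤ cdf P X x) :
    0 ≤ x :=
  not_lt.1 fun hneg => by linarith [cdf_eq_zero_of_neg P hX0 hneg]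

lemma distortionRiskE_congr_ae (K : DistortionKernel) {Y : Ω → ℝ} (h : X =ᵐ[P] Y) :
    distortionRiskE P K X = distortionRiskE P K Y := by
  have hP : ∀ x, P {ω | x < X ω} = P {ω | x < Y ω} := fun x =>
    measure_congr (h.fun_comp (x < ·))
  simp only [distortionRiskE, VaR, hP]

variable [IsProbabilityMeasure P]

lemma cdf_eq_cdf_map (hX : Measurable X) : cdf P X = ProbabilityTheory.cdf (P.map X) := by
  have := Measure.isProbabilityMeasure_map (μ := P) hX.aemeasurable
  ext x
  rw [ProbabilityTheory.cdf_eq_real, measureReal_def, Measure.map_apply hX measurableSet_Iic]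
  rfl

lemma measure_lt_le_iff_le_cdf (hX : Measurable X) (ht : t ≤ 1) (x : ℝ) :
    P {ω | x < X ω} ≤ ENNReal.ofReal (1 - t) ↔ t ≤ cdf P X x := by
  have hc : {ω | x < X ω} = {ω | X ω ≤ x}ᶜ := by ext ω; simp
  rw [← ENNReal.toReal_le_toReal (measure_ne_top P _) ENNReal.ofReal_ne_top,
    ENNReal.toReal_ofReal (by linarith), ← measureReal_def, hc,
    probReal_compl_eq_one_sub (measurableSet_le hX measurable_const), cdf, measureReal_def]
  constructor <;> intro h <;> linarith

lemma VaR_eq_sInf_cdf (hX : Measurable X) (ht : t ≤ 1) :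
    VaR P X t = sInf {x | t ≤ cdf P X x} := by
  simp_rw [VaR, measure_lt_le_iff_le_cdf hX ht]

lemma exists_le_cdf_of_lt_one (hX : Measurable X) (ht : t < 1) : ∃ x, t ≤ cdf P X x := by
  rw [cdf_eq_cdf_map hX]
  exact ((ProbabilityTheory.tendsto_cdf_atTop _).eventually_const_lt ht).exists.imp
    fun _ => le_of_lt

lemma VaR_nonneg_s19 (hX : Measurable X) (hX0 : ∀ ω, 0 ≤ X ω) (ht : t ∈ Ioc 0 1) :
    0 ≤ VaR P X t := by
  rw [VaR_eq_sInf_cdf hX ht.2]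
  exact Real.sInf_nonneg fun _ => nonneg_of_le_cdf hX0 ht.1

lemma VaR_eq_zero_of_not_exists (hX : Measurable X) (ht : t ≤ 1)
    (hne : ¬ ∃ x, t ≤ cdf P X x) : VaR P X t = 0 := by
  rw [VaR_eq_sInf_cdf hX ht, show {x | t ≤ cdf P X x} = ∅ from
    eq_empty_of_forall_notMem fun x hx => hne ⟨x, hx⟩, Real.sInf_empty]

/-- The infimum defining `VaR` is attained, by right-continuity of the cdf. -/
lemma le_cdf_VaR (hX : Measurable X) (ht : t ≤ 1) (hne : ∃ x, t ≤ cdf P X x) :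
    t ≤ cdf P X (VaR P X t) := by
  rw [VaR_eq_sInf_cdf hX ht]
  have hgt : ∀ x, sInf {x | t ≤ cdf P X x} < x → t ≤ cdf P X x := fun x hx =>
    let ⟨_, hy, hyx⟩ := exists_lt_of_csInf_lt hne hx
    le_trans hy (monotone_cdf P X hyx.le)
  have hrc : ContinuousWithinAt (cdf P X) (Ioi (sInf {x | t ≤ cdf P X x}))
      (sInf {x | t ≤ cdf P X x}) := by
    rw [cdf_eq_cdf_map hX]
    exact ((ProbabilityTheory.cdf _).right_continuous _).mono Ioi_subset_Ici_self
  exact ge_of_tendsto hrc (eventually_nhdsWithin_of_forall hgt)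

lemma VaR_le_iff (hX : Measurable X) (hX0 : ∀ ω, 0 ≤ X ω) (ht : t ∈ Ioc 0 1)
    (hne : ∃ x, t ≤ cdf P X x) (s : ℝ) : VaR P X t ≤ s ↔ t ≤ cdf P X s := by
  refine ⟨fun h => le_trans (le_cdf_VaR hX ht.2 hne) (monotone_cdf P X h), fun h => ?_⟩
  rw [VaR_eq_sInf_cdf hX ht.2]
  exact csInf_le ⟨0, fun _ => nonneg_of_le_cdf hX0 ht.1⟩ h

lemma lt_VaR_iff (hX : Measurable X) (hX0 : ∀ ω, 0 ≤ X ω) (ht : t ∈ Ioc 0 1)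
    (hne : ∃ x, t ≤ cdf P X x) (s : ℝ) : s < VaR P X t ↔ cdf P X s < t := by
  simpa only [not_le] using (VaR_le_iff hX hX0 ht hne s).not

lemma VaR_one_min (hX : Measurable X) (hunb : ∀ s, cdf P X s < 1) (m : ℝ) :
    VaR P (fun ω => min (X ω) m) 1 = m := by
  rw [VaR_eq_sInf_cdf (hX.min measurable_const) le_rfl]
  refine (congrArg sInf (ext fun x => ?_)).trans csInf_Ici
  change 1 ≤ cdf P _ x ↔ m ≤ x
  constructor
  · intro hx
    by_contra hlt
    have hset : {ω | min (X ω) m ≤ x} = {ω | X ω ≤ x} := by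
      ext ω
      simp [not_le.1 hlt]
    have : cdf P (fun ω => min (X ω) m) x = cdf P X x := by simp only [cdf, hset]
    linarith [hunb x]
  · intro hx
    have : {ω | min (X ω) m ≤ x} = univ :=
      eq_univ_of_forall fun ω => (min_le_right _ _).trans hx
    rw [cdf, this, measure_univ, ENNReal.toReal_one]

lemma VaR_comp (hX : Measurable X) (hX0 : ∀ ω, 0 ≤ X ω) {g : ℝ → ℝ} (hg : Monotone g)
    (hgc : Continuous g) (hg0 : ∀ ω, 0 ≤ g (X ω)) (ht : t ∈ Ioc 0 1)
    (hne : ∃ x, t ≤ cdf P X x) : VaR P (fun ω => g (X ω)) t = g (VaR P X t) := by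
  set Y := fun ω => g (X ω)
  have hY : Measurable Y := hgc.measurable.comp hX
  have hcomp : ∀ x, cdf P X x ≤ cdf P Y (g x) := fun x => cdf_le_cdf_of_imp P fun _ hω => hg hω
  have hneY : ∃ y, t ≤ cdf P Y y := let ⟨x, hx⟩ := hne; ⟨g x, hx.trans (hcomp x)⟩
  refine le_antisymm ((VaR_le_iff hY hg0 ht hneY _).2
    ((le_cdf_VaR hX ht.2 hne).trans (hcomp _))) (not_lt.1 fun hlt => ?_)
  -- by continuity of `g`, some `x < VaR P X t` has `VaR P Y t < g x`, so `{Y ≤ VaR P Y t}`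
  -- lies in `{X ≤ x}`
  obtain ⟨x, hxr, hxq⟩ := ((((hgc.tendsto _).eventually (lt_mem_nhds hlt)).filter_mono
    nhdsWithin_le_nhds).and self_mem_nhdsWithin).exists (f := 𝓝[<] (VaR P X t))
  have hx : t ≤ cdf P X x := (le_cdf_VaR hY ht.2 hneY).trans <|
    cdf_le_cdf_of_imp P fun ω hω => not_lt.1 fun h => (hxr.trans_le (hg h.le)).not_ge hω
  exact (not_le.2 hxq) ((VaR_le_iff hX hX0 ht hne x).2 hx)

end VaR

lemma tendsto_measure_inter_setOf_lt {β : Type*} [MeasurableSpace β] (ν : Measure β)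
    (B : Set β) (F : β → ℝ) (a : ℝ) :
    Tendsto (fun t => ν (B ∩ {s | F s < t})) (𝓝[<] a) (𝓝 (ν (B ∩ {s | F s < a}))) := by
  have hmono : Monotone fun t => ν (B ∩ {s | F s < t}) := fun t t' h =>
    measure_mono (inter_subset_inter_right _ fun s (hs : F s < t) => hs.trans_le h)
  convert hmono.tendsto_nhdsLT a using 2
  refine le_antisymm ?_ (sSup_le ?_)
  · have hU : B ∩ {s | F s < a} = ⋃ n : ℕ, B ∩ {s | F s < a - 1 / (n + 1)} := by
      ext s
      simp only [mem_inter_iff, mem_iUnion]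
      constructor
      · rintro ⟨hB, hs : F s < a⟩
        obtain ⟨n, hn⟩ := exists_nat_one_div_lt (sub_pos.2 hs)
        exact ⟨n, hB, show F s < _ by linarith⟩
      · rintro ⟨n, hB, hs : F s < _⟩
        exact ⟨hB, hs.trans (sub_lt_self a Nat.one_div_pos_of_nat)⟩
    have hUmono : Monotone fun n : ℕ => B ∩ {s | F s < a - 1 / (n + 1)} := fun m n h =>
      inter_subset_inter_right _ fun s (hs : F s < _) => hs.trans_le (by gcongr)
    rw [hU, hUmono.measure_iUnion]
    exact iSup_le fun n => le_sSup ⟨_, sub_lt_self a Nat.one_div_pos_of_nat, rfl⟩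
  · rintro _ ⟨t, ht, rfl⟩
    exact hmono ht.le

lemma eqOn_Ioc_of_eqOn_Ioo {α : Type*} [TopologicalSpace α] [T2Space α] {g h : ℝ → α}
    (hg : Tendsto g (𝓝[<] 1) (𝓝 (g 1))) (hh : Tendsto h (𝓝[<] 1) (𝓝 (h 1)))
    (hgh : EqOn g h (Ioo 0 1)) : EqOn g h (Ioc 0 1) := fun t ht => by
  rcases ht.2.lt_or_eq with ht1 | rfl
  · exact hgh ⟨ht.1, ht1⟩
  · exact tendsto_nhds_unique_of_eventuallyEq hg hh
      (eventually_of_mem (Ioo_mem_nhdsLT one_pos) hgh)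

/-- Tonelli's theorem for the region `{(t, s) | F s < t}` of `T × B`. -/
lemma lintegral_measure_inter_setOf_lt {β : Type*} [MeasurableSpace β] {μ : Measure ℝ}
    {ν : Measure β} [SFinite μ] [SFinite ν] {F : β → ℝ} (hF : Measurable F) {T : Set ℝ}
    {B : Set β} (hB : MeasurableSet B) :
    ∫⁻ t in T, ν (B ∩ {s | F s < t}) ∂μ = ∫⁻ s in B, μ (T ∩ Ioi (F s)) ∂ν := by
  have hE : MeasurableSet {p : ℝ × β | F p.2 < p.1} :=
    measurableSet_lt (hF.comp measurable_snd) measurable_fst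
  calc ∫⁻ t in T, ν (B ∩ {s | F s < t}) ∂μ
      = (μ.restrict T).prod (ν.restrict B) {p | F p.2 < p.1} := by
        rw [Measure.prod_apply hE]
        refine lintegral_congr fun t => ?_
        rw [Measure.restrict_apply' hB, inter_comm]
        rfl
    _ = ∫⁻ s in B, μ (T ∩ Ioi (F s)) ∂ν := by
        rw [Measure.prod_apply_symm hE]
        refine lintegral_congr fun s => ?_
        change μ.restrict T (Ioi (F s)) = _
        rw [Measure.restrict_apply measurableSet_Ioi, inter_comm]

lemma lintegral_Ioc_eq_lintegral_Ioo_add (μ : Measure ℝ) (g : ℝ → ℝ≥0∞) :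
    ∫⁻ t in Ioc 0 1, g t ∂μ = ∫⁻ t in Ioo 0 1, g t ∂μ + g 1 * μ {1} := by
  rw [← Ioo_insert_right one_pos, ← union_singleton,
    lintegral_union (measurableSet_singleton 1) (by simp), lintegral_singleton]

section Risk

variable {P : Measure Ω} {X : Ω → ℝ} {t : ℝ}

/-- `VaR P X t` read in `[0, ∞]` for `X ≥ 0`. It agrees with `ENNReal.ofReal (VaR P X t)` except
at `t = 1` for an essentially unbounded `X`, where it is `∞` (the essential supremum) while `VaR`
takes the junk value `sInf ∅ = 0`. -/
def VaRE (P : Measure Ω) (X : Ω → ℝ) (t : ℝ) : ℝ≥0∞ :=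
  volume (Ioi 0 ∩ {s | cdf P X s < t})

lemma monotone_VaRE (P : Measure Ω) (X : Ω → ℝ) : Monotone (VaRE P X) := fun _ _ h =>
  measure_mono (inter_subset_inter_right _ fun _ hs => lt_of_lt_of_le hs h)

lemma tendsto_VaRE (X : Ω → ℝ) (t : ℝ) : Tendsto (VaRE P X) (𝓝[<] t) (𝓝 (VaRE P X t)) :=
  tendsto_measure_inter_setOf_lt _ _ _ t

def choquetRisk (P : Measure Ω) (K : DistortionKernel) (X : Ω → ℝ) : ℝ≥0∞ :=
  ∫⁻ t in Ioc (0 : ℝ) 1, VaRE P X t ∂K.toStieltjes.measure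

variable [IsProbabilityMeasure P]

lemma ofReal_VaR_eq_VaRE (hX : Measurable X) (hX0 : ∀ ω, 0 ≤ X ω) (ht : t ∈ Ioc 0 1)
    (hne : ∃ x, t ≤ cdf P X x) : ENNReal.ofReal (VaR P X t) = VaRE P X t := by
  have : Ioi 0 ∩ {s | cdf P X s < t} = Ioo 0 (VaR P X t) := by
    ext s
    simp [lt_VaR_iff hX hX0 ht hne]
  rw [VaRE, this, Real.volume_Ioo, sub_zero]

lemma ofReal_VaR_le_VaRE (hX : Measurable X) (hX0 : ∀ ω, 0 ≤ X ω) (ht : t ∈ Ioc 0 1) :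
    ENNReal.ofReal (VaR P X t) ≤ VaRE P X t := by
  by_cases hne : ∃ x, t ≤ cdf P X x
  · exact (ofReal_VaR_eq_VaRE hX hX0 ht hne).le
  · rw [VaR_eq_zero_of_not_exists hX ht.2 hne, ENNReal.ofReal_zero]
    exact bot_le

variable (K : DistortionKernel) {K' : DistortionKernel}

lemma lintegral_Ioc_volume_inter_cdf_lt {B : Set ℝ} (hB : MeasurableSet B) :
    ∫⁻ t in Ioc 0 1, volume (B ∩ {s | cdf P X s < t}) ∂K.toStieltjes.measure
      = ∫⁻ s in B, ENNReal.ofReal (1 - K.toStieltjes (cdf P X s)) := by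
  rw [lintegral_measure_inter_setOf_lt (measurable_cdf P X) hB]
  refine lintegral_congr fun s => ?_
  rw [Ioc_inter_Ioi, max_eq_right (cdf_nonneg P X s), K.measure_Ioc_one]

lemma lintegral_Ioo_volume_inter_cdf_lt {B : Set ℝ} (hB : MeasurableSet B) :
    ∫⁻ t in Ioo 0 1, volume (B ∩ {s | cdf P X s < t}) ∂K.toStieltjes.measure
      = ∫⁻ s in B, K.toStieltjes.measure (Ioo (cdf P X s) 1) := by
  rw [lintegral_measure_inter_setOf_lt (measurable_cdf P X) hB]
  refine lintegral_congr fun s => ?_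
  rw [Ioo_inter_Ioi, max_eq_right (cdf_nonneg P X s)]

lemma choquetRisk_eq_lintegral_cdf :
    choquetRisk P K X = ∫⁻ s in Ioi 0, ENNReal.ofReal (1 - K.toStieltjes (cdf P X s)) :=
  lintegral_Ioc_volume_inter_cdf_lt K measurableSet_Ioi

variable {K}

lemma choquetRisk_anti (h : ∀ x, K.toStieltjes x ≤ K'.toStieltjes x) :
    choquetRisk P K' X ≤ choquetRisk P K X := by
  simp only [choquetRisk_eq_lintegral_cdf]
  exact lintegral_mono fun s => ENNReal.ofReal_le_ofReal (by linarith [h (cdf P X s)])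

lemma distortionRiskE_le_choquetRisk (hX : Measurable X) (hX0 : ∀ ω, 0 ≤ X ω) :
    distortionRiskE P K X ≤ choquetRisk P K X :=
  setLIntegral_mono' measurableSet_Ioc fun _ ht => ofReal_VaR_le_VaRE hX hX0 ht

lemma distortionRiskE_eq_choquetRisk_of_exists (hX : Measurable X) (hX0 : ∀ ω, 0 ≤ X ω)
    (hbdd : ∃ c, 1 ≤ cdf P X c) : distortionRiskE P K X = choquetRisk P K X :=
  setLIntegral_congr_fun measurableSet_Ioc fun _ ht =>
    ofReal_VaR_eq_VaRE hX hX0 ht (hbdd.imp fun _ hc => ht.2.trans hc)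

lemma distortionRiskE_eq_lintegral_Ioo (hX : Measurable X) (hX0 : ∀ ω, 0 ≤ X ω)
    (hunb : ∀ s, cdf P X s < 1) :
    distortionRiskE P K X = ∫⁻ t in Ioo 0 1, VaRE P X t ∂K.toStieltjes.measure := by
  rw [distortionRiskE, lintegral_Ioc_eq_lintegral_Ioo_add,
    VaR_eq_zero_of_not_exists hX le_rfl fun ⟨x, hx⟩ => (hunb x).not_ge hx,
    ENNReal.ofReal_zero, zero_mul, add_zero]
  exact setLIntegral_congr_fun measurableSet_Ioo fun t ht =>
    ofReal_VaR_eq_VaRE hX hX0 (Ioo_subset_Ioc_self ht) (exists_le_cdf_of_lt_one hX ht.2)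

/-- `ρ_Φ(X ∧ m) ≥ m · dΦ{1}` since `VaR_1(X ∧ m) = m`. -/
lemma ContinuityCondition.distortionRiskE_eq_top (hc : ContinuityCondition P K)
    (hK : K.toStieltjes.measure {1} ≠ 0) (hX : Measurable X) (hX0 : ∀ ω, 0 ≤ X ω)
    (hunb : ∀ s, cdf P X s < 1) : distortionRiskE P K X = ⊤ := by
  have hlow : ∀ m : ℕ,
      m * K.toStieltjes.measure {1} ≤ distortionRiskE P K (fun ω => min (X ω) m) := fun m => by
    rw [distortionRiskE, lintegral_Ioc_eq_lintegral_Ioo_add, VaR_one_min hX hunb,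
      ENNReal.ofReal_natCast]
    exact le_add_self
  by_contra hne
  obtain ⟨m, hm⟩ := ENNReal.exists_nat_mul_gt hK hne
  refine hm.not_ge (ge_of_tendsto (hc X hX hX0) (eventually_atTop.2 ⟨m, fun k hk => ?_⟩))
  exact le_trans (by gcongr) (hlow k)

lemma ContinuityCondition.distortionRiskE_eq_choquetRisk (hc : ContinuityCondition P K)
    (hX : Measurable X) (hX0 : ∀ ω, 0 ≤ X ω) : distortionRiskE P K X = choquetRisk P K X := by
  by_cases hbdd : ∃ c, 1 ≤ cdf P X c
  · exact distortionRiskE_eq_choquetRisk_of_exists hX hX0 hbdd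
  simp only [not_exists, not_le] at hbdd
  by_cases hK : K.toStieltjes.measure {1} = 0
  · rw [distortionRiskE_eq_lintegral_Ioo hX hX0 hbdd, choquetRisk,
      lintegral_Ioc_eq_lintegral_Ioo_add, hK, mul_zero, add_zero]
  · have htop := hc.distortionRiskE_eq_top hK hX hX0 hbdd
    exact htop.trans (eq_top_iff.2 (htop ▸ distortionRiskE_le_choquetRisk hX hX0)).symm

end Risk

lemma continuous_of_monotone_of_sub_le {g : ℝ → ℝ} (hg : Monotone g)
    (h : ∀ x y, x ≤ y → g y - g x ≤ y - x) : Continuous g := by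
  refine (LipschitzWith.of_le_add fun x y => ?_).continuous
  rw [Real.dist_eq]
  rcases le_total x y with hxy | hxy
  · linarith [hg hxy, abs_nonneg (x - y)]
  · linarith [h y x hxy, le_abs_self (x - y)]

lemma comp_eq_comp_max_zero {α β : Type*} (g : ℝ → β) {X : α → ℝ} (hX0 : ∀ ω, 0 ≤ X ω) :
    (fun ω => g (X ω)) = fun ω => g (max (X ω) 0) :=
  funext fun ω => by rw [max_eq_left (hX0 ω)]

namespace IsAdmissible

variable {n : ℕ} {f : Fin n → ℝ → ℝ}

lemma sub_le (hf : IsAdmissible n f) (i : Fin n) {a b : ℝ} (ha : 0 ≤ a) (hab : a ≤ b) :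
    f i b - f i a ≤ b - a := by
  have hb : 0 ≤ b := ha.trans hab
  calc f i b - f i a ≤ ∑ j, (f j b - f j a) :=
        Finset.single_le_sum (f := fun j => f j b - f j a)
          (fun j _ => sub_nonneg.2 (hf.1 j ha hb hab)) (Finset.mem_univ i)
    _ = b - a := by rw [Finset.sum_sub_distrib, hf.2.2.2 a ha, hf.2.2.2 b hb]

lemma monotone_comp_max (hf : IsAdmissible n f) (i : Fin n) :
    Monotone fun x => f i (max x 0) := fun _ _ hxy =>
  hf.1 i (mem_Ici.2 (le_max_right _ _)) (mem_Ici.2 (le_max_right _ _)) (max_le_max hxy le_rfl)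

lemma continuous_comp_max (hf : IsAdmissible n f) (i : Fin n) :
    Continuous fun x => f i (max x 0) :=
  continuous_of_monotone_of_sub_le (hf.monotone_comp_max i) fun x y hxy =>
    (hf.sub_le i (le_max_right _ _) (max_le_max hxy le_rfl)).trans (by
      rcases le_total y 0 with hy | hy
      · rw [max_eq_right hy, max_eq_right (hxy.trans hy)]; linarith
      · rw [max_eq_left hy]; linarith [le_max_left x 0])

lemma measurable_comp {X : Ω → ℝ} (hf : IsAdmissible n f) (hX : Measurable X)
    (hX0 : ∀ ω, 0 ≤ X ω) (i : Fin n) : Measurable fun ω => f i (X ω) := by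
  rw [comp_eq_comp_max_zero (f i) hX0]
  exact (hf.continuous_comp_max i).measurable.comp hX

end IsAdmissible

section LowerBound

variable {P : Measure Ω} [IsProbabilityMeasure P] {X : Ω → ℝ} {n : ℕ} {f : Fin n → ℝ → ℝ}

lemma VaRE_eq_sum_comp (hf : IsAdmissible n f) (hX : Measurable X) (hX0 : ∀ ω, 0 ≤ X ω) :
    EqOn (VaRE P X) (fun t => ∑ i, VaRE P (fun ω => f i (X ω)) t) (Ioc 0 1) := by
  refine eqOn_Ioc_of_eqOn_Ioo (tendsto_VaRE X 1)
    (tendsto_finsetSum _ fun i _ => tendsto_VaRE _ 1) fun t ht => ?_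
  have ht' := Ioo_subset_Ioc_self ht
  have hne := exists_le_cdf_of_lt_one (P := P) hX ht.2
  have hq := VaR_nonneg_s19 (P := P) hX hX0 ht'
  rw [← ofReal_VaR_eq_VaRE hX hX0 ht' hne, ← hf.2.2.2 _ hq,
    ENNReal.ofReal_sum_of_nonneg fun i _ => hf.2.1 i _ hq]
  refine Finset.sum_congr rfl fun i _ => ?_
  have hY := hf.measurable_comp hX hX0 i
  rw [← ofReal_VaR_eq_VaRE hY (fun ω => hf.2.1 i _ (hX0 ω)) ht'
      (exists_le_cdf_of_lt_one hY ht.2),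
    comp_eq_comp_max_zero (f i) hX0, VaR_comp hX hX0 (hf.monotone_comp_max i)
      (hf.continuous_comp_max i) (fun _ => hf.2.1 i _ (le_max_right _ _)) ht' hne,
    max_eq_left hq]

lemma choquetRisk_eq_sum_comp (hf : IsAdmissible n f) (hX : Measurable X)
    (hX0 : ∀ ω, 0 ≤ X ω) (K : DistortionKernel) :
    choquetRisk P K X = ∑ i, choquetRisk P K (fun ω => f i (X ω)) := by
  rw [choquetRisk, setLIntegral_congr_fun measurableSet_Ioc (VaRE_eq_sum_comp hf hX hX0)]
  exact lintegral_finsetSum _ fun i _ => (monotone_VaRE P _).measurable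

lemma distortionRiskE_le_sum_of_isAdmissible {K : Fin n → DistortionKernel}
    {Kmax : DistortionKernel} (hcont : ∀ i, ContinuityCondition P (K i))
    (hle : ∀ i x, (K i).toStieltjes x ≤ Kmax.toStieltjes x) (hX : Measurable X)
    (hX0 : ∀ ω, 0 ≤ X ω) (hf : IsAdmissible n f) :
    distortionRiskE P Kmax X ≤ ∑ i, distortionRiskE P (K i) (fun ω => f i (X ω)) :=
  calc distortionRiskE P Kmax X
      ≤ choquetRisk P Kmax X := distortionRiskE_le_choquetRisk hX hX0
    _ = ∑ i, choquetRisk P Kmax (fun ω => f i (X ω)) := choquetRisk_eq_sum_comp hf hX hX0 Kmax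
    _ ≤ ∑ i, choquetRisk P (K i) (fun ω => f i (X ω)) :=
        Finset.sum_le_sum fun i _ => choquetRisk_anti (hle i)
    _ = ∑ i, distortionRiskE P (K i) (fun ω => f i (X ω)) :=
        Finset.sum_congr rfl fun i _ => ((hcont i).distortionRiskE_eq_choquetRisk
          (hf.measurable_comp hX hX0 i) fun ω => hf.2.1 i _ (hX0 ω)).symm

end LowerBound

section Allocation

/-- The allocation that gives an agent the increments of the risk at the levels in `A`. -/
def cumulativeVolume (A : Set ℝ) (x : ℝ) : ℝ := (volume (A ∩ Ioo 0 x)).toReal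

lemma volume_inter_Ioo_ne_top (A : Set ℝ) (x : ℝ) : volume (A ∩ Ioo 0 x) ≠ ⊤ :=
  ((measure_mono inter_subset_right).trans_lt (by simp [Real.volume_Ioo])).ne

lemma ofReal_cumulativeVolume (A : Set ℝ) (x : ℝ) :
    ENNReal.ofReal (cumulativeVolume A x) = volume (A ∩ Ioo 0 x) :=
  ENNReal.ofReal_toReal (volume_inter_Ioo_ne_top A x)

lemma cumulativeVolume_nonneg (A : Set ℝ) (x : ℝ) : 0 ≤ cumulativeVolume A x :=
  ENNReal.toReal_nonneg

lemma monotone_cumulativeVolume (A : Set ℝ) : Monotone (cumulativeVolume A) := fun _ y h =>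
  ENNReal.toReal_mono (volume_inter_Ioo_ne_top A y)
    (measure_mono (inter_subset_inter_right _ (Ioo_subset_Ioo_right h)))

lemma cumulativeVolume_sub_le (A : Set ℝ) {x y : ℝ} (h : x ≤ y) :
    cumulativeVolume A y - cumulativeVolume A x ≤ y - x := by
  have hsub : A ∩ Ioo 0 y ⊆ (A ∩ Ioo 0 x) ∪ Ico x y := fun s ⟨hA, hs0, hsy⟩ =>
    (lt_or_ge s x).imp (fun hsx => ⟨hA, hs0, hsx⟩) fun hxs => ⟨hxs, hsy⟩
  have hle : volume (A ∩ Ioo 0 y) ≤ volume (A ∩ Ioo 0 x) + ENNReal.ofReal (y - x) :=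
    (measure_mono hsub).trans ((measure_union_le _ _).trans_eq (by rw [Real.volume_Ico]))
  have := ENNReal.toReal_mono (ENNReal.add_ne_top.2 ⟨volume_inter_Ioo_ne_top A x,
    ENNReal.ofReal_ne_top⟩) hle
  rw [ENNReal.toReal_add (volume_inter_Ioo_ne_top A x) ENNReal.ofReal_ne_top,
    ENNReal.toReal_ofReal (sub_nonneg.2 h)] at this
  rw [cumulativeVolume, cumulativeVolume]
  linarith

lemma continuous_cumulativeVolume (A : Set ℝ) : Continuous (cumulativeVolume A) :=
  continuous_of_monotone_of_sub_le (monotone_cumulativeVolume A) fun _ _ h =>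
    cumulativeVolume_sub_le A h

variable {n : ℕ} {A : Fin n → Set ℝ}

lemma sum_cumulativeVolume (hA : ∀ i, MeasurableSet (A i))
    (hdisj : Pairwise (Function.onFun Disjoint A)) (hcover : ⋃ i, A i = Ioi 0) {x : ℝ}
    (hx : 0 ≤ x) : ∑ i, cumulativeVolume (A i) x = x := by
  have hvol := measure_iUnion (μ := volume) (f := fun i => A i ∩ Ioo 0 x)
    (fun i j hij => (hdisj hij).mono inter_subset_left inter_subset_left)
    fun i => (hA i).inter measurableSet_Ioo
  rw [tsum_fintype, ← iUnion_inter, hcover, inter_eq_right.2 Ioo_subset_Ioi_self] at hvol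
  simp only [cumulativeVolume]
  rw [← ENNReal.toReal_sum fun i _ => volume_inter_Ioo_ne_top (A i) x, ← hvol, Real.volume_Ioo,
    sub_zero, ENNReal.toReal_ofReal hx]

lemma isAdmissible_cumulativeVolume (hA : ∀ i, MeasurableSet (A i))
    (hdisj : Pairwise (Function.onFun Disjoint A)) (hcover : ⋃ i, A i = Ioi 0) :
    IsAdmissible n fun i => cumulativeVolume (A i) :=
  ⟨fun i => (monotone_cumulativeVolume (A i)).monotoneOn _,
    fun i x _ => cumulativeVolume_nonneg (A i) x, fun i => by simp [cumulativeVolume],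
    fun _ hx => sum_cumulativeVolume hA hdisj hcover hx⟩

end Allocation

lemma exists_measurable_partition_of_exists_eq {α : Type*} [MeasurableSpace α] {S : Set α}
    (hS : MeasurableSet S) {n : ℕ} {φ : Fin n → α → ℝ} {ψ : α → ℝ} (hφ : ∀ i, Measurable (φ i))
    (hψ : Measurable ψ) (hex : ∀ s, ∃ i, φ i s = ψ s) :
    ∃ A : Fin n → Set α, (∀ i, MeasurableSet (A i)) ∧ Pairwise (Function.onFun Disjoint A) ∧
      ⋃ i, A i = S ∧ ∀ i, ∀ s ∈ A i, φ i s = ψ s := by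
  set E : Fin n → Set α := fun i => S ∩ {s | φ i s = ψ s}
  have hE : ∀ i, MeasurableSet (E i) := fun i => hS.inter (measurableSet_eq_fun (hφ i) hψ)
  refine ⟨disjointed E, fun i => ?_, disjoint_disjointed E, ?_,
    fun i s hs => (disjointed_subset E i hs).2⟩
  · rw [disjointed_eq_inter_compl]
    exact (hE i).inter (MeasurableSet.iInter fun j => MeasurableSet.iInter fun _ => (hE j).compl)
  · rw [iUnion_disjointed, ← inter_iUnion, inter_eq_left]
    exact fun s _ => mem_iUnion.2 (hex s)

section UpperBound

variable {P : Measure Ω} [IsProbabilityMeasure P] {X : Ω → ℝ} {A : Set ℝ}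

lemma VaRE_comp_cumulativeVolume (hX : Measurable X) (hX0 : ∀ ω, 0 ≤ X ω) (hA0 : A ⊆ Ioi 0) :
    EqOn (VaRE P fun ω => cumulativeVolume A (X ω)) (fun t => volume (A ∩ {s | cdf P X s < t}))
      (Ioc 0 1) := by
  refine eqOn_Ioc_of_eqOn_Ioo (tendsto_VaRE _ 1) (tendsto_measure_inter_setOf_lt _ _ _ 1)
    fun t ht => ?_
  have ht' := Ioo_subset_Ioc_self ht
  have hne := exists_le_cdf_of_lt_one (P := P) hX ht.2
  have hY : Measurable fun ω => cumulativeVolume A (X ω) :=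
    (continuous_cumulativeVolume A).measurable.comp hX
  have hY0 : ∀ ω, 0 ≤ cumulativeVolume A (X ω) := fun _ => cumulativeVolume_nonneg A _
  rw [← ofReal_VaR_eq_VaRE hY hY0 ht' (exists_le_cdf_of_lt_one hY ht.2),
    VaR_comp hX hX0 (monotone_cumulativeVolume A) (continuous_cumulativeVolume A) hY0 ht' hne,
    ofReal_cumulativeVolume]
  congr 1
  ext s
  refine and_congr_right fun hs => ?_
  rw [mem_Ioo, lt_VaR_iff hX hX0 ht' hne]
  exact and_iff_right (hA0 hs)

variable (K : DistortionKernel)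

lemma choquetRisk_comp_cumulativeVolume (hX : Measurable X) (hX0 : ∀ ω, 0 ≤ X ω)
    (hA : MeasurableSet A) (hA0 : A ⊆ Ioi 0) :
    choquetRisk P K (fun ω => cumulativeVolume A (X ω))
      = ∫⁻ s in A, ENNReal.ofReal (1 - K.toStieltjes (cdf P X s)) := by
  rw [choquetRisk, setLIntegral_congr_fun measurableSet_Ioc
    (VaRE_comp_cumulativeVolume hX hX0 hA0), lintegral_Ioc_volume_inter_cdf_lt K hA]

lemma lintegral_Ioo_VaRE_comp_cumulativeVolume (hX : Measurable X) (hX0 : ∀ ω, 0 ≤ X ω)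
    (hA : MeasurableSet A) (hA0 : A ⊆ Ioi 0) :
    ∫⁻ t in Ioo 0 1, VaRE P (fun ω => cumulativeVolume A (X ω)) t ∂K.toStieltjes.measure
      = ∫⁻ s in A, K.toStieltjes.measure (Ioo (cdf P X s) 1) := by
  rw [setLIntegral_congr_fun measurableSet_Ioo
    ((VaRE_comp_cumulativeVolume hX hX0 hA0).mono Ioo_subset_Ioc_self),
    lintegral_Ioo_volume_inter_cdf_lt K hA]

variable {n : ℕ} {K : Fin n → DistortionKernel} {Kmax : DistortionKernel} {A : Fin n → Set ℝ}

lemma sum_distortionRiskE_comp_cumulativeVolume (hcont : ∀ i, ContinuityCondition P (K i))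
    (hX : Measurable X) (hX0 : ∀ ω, 0 ≤ X ω) (hA : ∀ i, MeasurableSet (A i))
    (hdisj : Pairwise (Function.onFun Disjoint A)) (hcover : ⋃ i, A i = Ioi 0)
    (hattain : ∀ i, ∀ s ∈ A i, (K i).toStieltjes (cdf P X s) = Kmax.toStieltjes (cdf P X s)) :
    ∑ i, distortionRiskE P (K i) (fun ω => cumulativeVolume (A i) (X ω))
      = choquetRisk P Kmax X :=
  have hA0 : ∀ i, A i ⊆ Ioi 0 := fun i => hcover ▸ subset_iUnion A i
  calc ∑ i, distortionRiskE P (K i) (fun ω => cumulativeVolume (A i) (X ω))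
      = ∑ i, ∫⁻ s in A i, ENNReal.ofReal (1 - (K i).toStieltjes (cdf P X s)) :=
        Finset.sum_congr rfl fun i _ => by
          rw [(hcont i).distortionRiskE_eq_choquetRisk
            (X := fun ω => cumulativeVolume (A i) (X ω))
            ((continuous_cumulativeVolume _).measurable.comp hX)
            fun _ => cumulativeVolume_nonneg _ _,
            choquetRisk_comp_cumulativeVolume (K i) hX hX0 (hA i) (hA0 i)]
    _ = ∑ i, ∫⁻ s in A i, ENNReal.ofReal (1 - Kmax.toStieltjes (cdf P X s)) :=
        Finset.sum_congr rfl fun i _ => setLIntegral_congr_fun (hA i) fun s hs => by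
          rw [hattain i s hs]
    _ = ∫⁻ s in ⋃ i, A i, ENNReal.ofReal (1 - Kmax.toStieltjes (cdf P X s)) :=
        ((lintegral_iUnion hA hdisj _).trans (tsum_fintype _)).symm
    _ = choquetRisk P Kmax X := by rw [hcover, choquetRisk_eq_lintegral_cdf]

/-- The two sides can differ only for an essentially unbounded `X` when `dΦ_max` has an atom at
`1`. Then some `A i` has infinite length, so `Y = cumulativeVolume (A i) ∘ X` is unbounded too and
`ρ_i(Y) = ∞`, while the part of `ρ_i(Y)` on `t < 1` is dominated by that of `ρ_max(X)`. -/
lemma choquetRisk_le_distortionRiskE_of_partition (hcont : ∀ i, ContinuityCondition P (K i))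
    (hle : ∀ i x, (K i).toStieltjes x ≤ Kmax.toStieltjes x) (hX : Measurable X)
    (hX0 : ∀ ω, 0 ≤ X ω) (hA : ∀ i, MeasurableSet (A i)) (hcover : ⋃ i, A i = Ioi 0)
    (hattain : ∀ i, ∀ s ∈ A i, (K i).toStieltjes (cdf P X s) = Kmax.toStieltjes (cdf P X s)) :
    choquetRisk P Kmax X ≤ distortionRiskE P Kmax X := by
  by_cases hbdd : ∃ c, 1 ≤ cdf P X c
  · exact (distortionRiskE_eq_choquetRisk_of_exists hX hX0 hbdd).ge
  simp only [not_exists, not_le] at hbdd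
  by_cases hK : Kmax.toStieltjes.measure {1} = 0
  · rw [distortionRiskE_eq_lintegral_Ioo hX hX0 hbdd, choquetRisk,
      lintegral_Ioc_eq_lintegral_Ioo_add, hK, mul_zero, add_zero]
  suffices htop : distortionRiskE P Kmax X = ⊤ by rw [htop]; exact le_top
  have hA0 : ∀ i, A i ⊆ Ioi 0 := fun i => hcover ▸ subset_iUnion A i
  obtain ⟨i, hi⟩ : ∃ i, volume (A i) = ⊤ := by
    by_contra! h
    have hsum : volume (Ioi (0 : ℝ)) ≤ ∑ i, volume (A i) :=
      hcover ▸ measure_iUnion_fintype_le _ _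
    rw [Real.volume_Ioi] at hsum
    exact (ENNReal.sum_lt_top.2 fun i _ => (h i).lt_top).not_ge hsum
  set Y := fun ω => cumulativeVolume (A i) (X ω)
  have hY : Measurable Y := (continuous_cumulativeVolume _).measurable.comp hX
  have hY0 : ∀ ω, 0 ≤ Y ω := fun _ => cumulativeVolume_nonneg _ _
  have hYunb : ∀ s, cdf P Y s < 1 := by
    by_contra! h
    have := ofReal_VaR_eq_VaRE hY hY0 ⟨one_pos, le_rfl⟩ h
    rw [VaRE_comp_cumulativeVolume hX hX0 (hA0 i) ⟨one_pos, le_rfl⟩] at this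
    beta_reduce at this
    rw [show {s | cdf P X s < 1} = univ from eq_univ_of_forall hbdd, inter_univ, hi] at this
    exact ENNReal.ofReal_ne_top this
  have hKi : (K i).toStieltjes.measure {1} ≠ 0 := fun h0 =>
    hK (le_zero_iff.1 (h0 ▸ DistortionKernel.measure_singleton_one_le (hle i)))
  rw [eq_top_iff, ← (hcont i).distortionRiskE_eq_top hKi hY hY0 hYunb]
  calc distortionRiskE P (K i) Y
      = ∫⁻ s in A i, (K i).toStieltjes.measure (Ioo (cdf P X s) 1) := by
        rw [distortionRiskE_eq_lintegral_Ioo hY hY0 hYunb,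
          lintegral_Ioo_VaRE_comp_cumulativeVolume (K i) hX hX0 (hA i) (hA0 i)]
    _ ≤ ∫⁻ s in A i, Kmax.toStieltjes.measure (Ioo (cdf P X s) 1) :=
        setLIntegral_mono' (hA i) fun s hs =>
          DistortionKernel.measure_Ioo_one_le (hle i) (hattain i s hs)
    _ ≤ ∫⁻ s in Ioi 0, Kmax.toStieltjes.measure (Ioo (cdf P X s) 1) :=
        lintegral_mono_set (hA0 i)
    _ = distortionRiskE P Kmax X := by
        rw [distortionRiskE_eq_lintegral_Ioo hX hX0 hbdd]
        exact (lintegral_Ioo_volume_inter_cdf_lt Kmax measurableSet_Ioi).symm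

end UpperBound

theorem stmt19_general (P : Measure Ω) [IsProbabilityMeasure P]
    (n : ℕ) (hn : 0 < n) (K : Fin n → DistortionKernel)
    (hcont : ∀ i, ContinuityCondition P (K i))
    (X₀ : Ω → ℝ) (hmeas : Measurable X₀) (hpos : ∀ᵐ ω ∂P, 0 ≤ X₀ ω)
    (Kmax : DistortionKernel)
    (hKmax : ∀ t : ℝ, Kmax.toStieltjes t = ⨆ i, (K i).toStieltjes t) :
    ⨅ (f : Fin n → ℝ → ℝ) (_ : IsAdmissible n f),
        ∑ i, distortionRiskE P (K i) (fun ω => f i (X₀ ω)) =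
      distortionRiskE P Kmax X₀ := by
  have : Nonempty (Fin n) := ⟨⟨0, hn⟩⟩
  have hle : ∀ i x, (K i).toStieltjes x ≤ Kmax.toStieltjes x := fun i x =>
    (hKmax x).symm ▸ le_ciSup (Finite.bddAbove_range fun i => (K i).toStieltjes x) i
  have hex : ∀ x, ∃ i, (K i).toStieltjes x = Kmax.toStieltjes x := fun x =>
    (Finite.exists_max fun i => (K i).toStieltjes x).imp fun i hi =>
      le_antisymm (hle i x) ((hKmax x).symm ▸ ciSup_le hi)
  obtain ⟨X, hX, hX0, hXX₀⟩ : ∃ X : Ω → ℝ, Measurable X ∧ (∀ ω, 0 ≤ X ω) ∧ X₀ =ᵐ[P] X :=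
    ⟨fun ω => max (X₀ ω) 0, hmeas.max measurable_const, fun _ => le_max_right _ _,
      hpos.mono fun _ hω => (max_eq_left hω).symm⟩
  rw [distortionRiskE_congr_ae Kmax hXX₀]
  refine (iInf_congr fun f => iInf_congr fun _ => Finset.sum_congr rfl fun i _ =>
    distortionRiskE_congr_ae (K i) (hXX₀.fun_comp (f i))).trans ?_
  obtain ⟨A, hA, hdisj, hcover, hattain⟩ := exists_measurable_partition_of_exists_eq
    measurableSet_Ioi (fun i => (K i).mono.measurable.comp (measurable_cdf P X))
    (Kmax.mono.measurable.comp (measurable_cdf P X)) fun s => hex (cdf P X s)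
  refine le_antisymm ?_ (le_iInf₂ fun f hf =>
    distortionRiskE_le_sum_of_isAdmissible hcont hle hX hX0 hf)
  calc _ ≤ ∑ i, distortionRiskE P (K i) (fun ω => cumulativeVolume (A i) (X ω)) :=
        iInf₂_le _ (isAdmissible_cumulativeVolume hA hdisj hcover)
    _ = choquetRisk P Kmax X :=
        sum_distortionRiskE_comp_cumulativeVolume hcont hX hX0 hA hdisj hcover hattain
    _ ≤ distortionRiskE P Kmax X :=
        choquetRisk_le_distortionRiskE_of_partition hcont hle hX hX0 hA hcover hattain

theorem stmt19 (P : Measure Ω) [IsProbabilityMeasure P]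
    (n : ℕ) (hn : 0 < n) (K : Fin n → DistortionKernel)
    (hcont : ∀ i, ContinuityCondition P (K i))
    (X₀ : Ω → ℝ) (hmeas : Measurable X₀) (hpos : ∀ᵐ ω ∂P, 0 ≤ X₀ ω)
    (hF0 : cdf P X₀ 0 = 0)
    (Kmax : DistortionKernel)
    (hKmax : ∀ t : ℝ, Kmax.toStieltjes t = ⨆ i, (K i).toStieltjes t) :
    ⨅ (f : Fin n → ℝ → ℝ) (_ : IsAdmissible n f),
        ∑ i, distortionRiskE P (K i) (fun ω => f i (X₀ ω)) =
      distortionRiskE P Kmax X₀ :=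
  stmt19_general P n hn K hcont X₀ hmeas hpos Kmax hKmax

end
end
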